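/- arXiv:math/9801150 — 3 statements merged into one kernel-verified Lean document; each statement's English description precedes it below -/
import Mathlib

section
/- Let K ⊂ ℂ be a compact connected set. The set of points p ∈ K such that K \ {p} has at least 3 connected components is at most countable. -/
open Set Metric

section Aux

variable {α : Type*} [TopologicalSpace α]

/-- A connected component of a subset is relatively closed. -/
lemma closure_inter_subset_connectedComponentIn {F : Set α} {x : α} :
    closure (connectedComponentIn F x) ∩ F ⊆ connectedComponentIn F x := by
  rintro y ⟨hyc, hyF⟩
  by_cases hx : x ∈ F
  · rw [connectedComponentIn_eq_image hx] at hyc ⊢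
    have h1 : (⟨y, hyF⟩ : F) ∈ closure (connectedComponent (⟨x, hx⟩ : F)) := by
      rw [closure_subtype]; exact hyc
    have h2 := isClosed_connectedComponent.closure_subset h1
    exact ⟨_, h2, rfl⟩
  · rw [connectedComponentIn_eq_empty hx, closure_empty] at hyc
    exact hyc.elim

/-- Boundary bumping: in a continuum `K`, every connected component of `K \ {p}`
has `p` in its closure. -/
lemma mem_closure_connectedComponentIn_diff
    {K : Set ℂ} (hK : IsCompact K) (hKc : IsPreconnected K) {p x : ℂ}
    (hp : p ∈ K) (hx : x ∈ K \ {p}) :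
    p ∈ closure (connectedComponentIn (K \ {p}) x) := by
  set C := connectedComponentIn (K \ {p}) x with hCdef
  by_contra hpc
  have hCsub : C ⊆ K \ {p} := connectedComponentIn_subset _ _
  have hclK : closure C ⊆ K := closure_minimal (hCsub.trans diff_subset) hK.isClosed
  have hCclosed : IsClosed C := by
    refine isClosed_of_closure_subset fun y hy => ?_
    have hyK : y ∈ K := hclK hy
    have hyp : y ≠ p := fun h => hpc (h ▸ hy)
    exact closure_inter_subset_connectedComponentIn ⟨hy, ⟨hyK, hyp⟩⟩
  have hpC : p ∉ C := fun h => hpc (subset_closure h)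
  obtain ⟨ε, hε, hball⟩ : ∃ ε > 0, Metric.ball p ε ⊆ Cᶜ :=
    Metric.isOpen_iff.mp hCclosed.isOpen_compl p hpC
  set N := K ∩ (Metric.ball p (ε / 2))ᶜ with hNdef
  have hNK : N ⊆ K \ {p} := by
    rintro y ⟨hyK, hyb⟩
    refine ⟨hyK, fun h => hyb ?_⟩
    simp only [mem_singleton_iff] at h
    subst h
    exact Metric.mem_ball_self (by positivity)
  have hCN : C ⊆ N := fun c hc =>
    ⟨(hCsub hc).1, fun hb => hball (Metric.ball_subset_ball (by linarith) hb) hc⟩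
  have hxC : x ∈ C := mem_connectedComponentIn hx
  have hxN : x ∈ N := hCN hxC
  have hNcomp : IsCompact N := hK.inter_right Metric.isOpen_ball.isClosed_compl
  have hCeqN : C = connectedComponentIn N x := by
    apply Subset.antisymm
    · exact isPreconnected_connectedComponentIn.subset_connectedComponentIn hxC hCN
    · exact isPreconnected_connectedComponentIn.subset_connectedComponentIn
        (mem_connectedComponentIn hxN) ((connectedComponentIn_subset _ _).trans hNK)
  haveI : CompactSpace ↥N := isCompact_iff_compactSpace.mp hNcomp
  set x' : ↥N := ⟨x, hxN⟩ with hx'def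
  have hccim : (Subtype.val '' connectedComponent x' : Set ℂ) = C := by
    rw [hCeqN, connectedComponentIn_eq_image hxN]
  set U : Set ↥N := Subtype.val ⁻¹' (Metric.closedBall p (ε / 2))ᶜ with hUdef
  have hUopen : IsOpen U :=
    Metric.isClosed_closedBall.isOpen_compl.preimage continuous_subtype_val
  have hccU : connectedComponent x' ⊆ U := by
    intro z hz
    have hzC : (z : ℂ) ∈ C := hccim ▸ mem_image_of_mem _ hz
    intro hzb
    have : (z : ℂ) ∈ Metric.ball p ε :=
      lt_of_le_of_lt (Metric.mem_closedBall.mp hzb) (by linarith)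
    exact hball this hzC
  -- extract a clopen set between the component and U
  obtain ⟨W', hW'clopen, hccW', hW'U⟩ :
      ∃ W' : Set ↥N, IsClopen W' ∧ connectedComponent x' ⊆ W' ∧ W' ⊆ U := by
    have hUc : IsCompact Uᶜ := hUopen.isClosed_compl.isCompact
    have hdisj :
        (Uᶜ ∩ ⋂ i : { s : Set ↥N // IsClopen s ∧ x' ∈ s }, (i : Set ↥N)) = ∅ := by
      rw [← connectedComponent_eq_iInter_isClopen x', eq_empty_iff_forall_notMem]
      rintro z ⟨hz1, hz2⟩
      exact hz1 (hccU hz2)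
    obtain ⟨u, hu⟩ := hUc.elim_finite_subfamily_closed _ (fun i => i.2.1.1) hdisj
    refine ⟨⋂ i ∈ u, (i : Set ↥N), isClopen_biInter_finset fun i _ => i.2.1, ?_, ?_⟩
    · exact subset_iInter₂ fun i _ =>
        connectedComponent_subset_iInter_isClopen.trans (iInter_subset _ i)
    · intro z hz
      by_contra hzU
      exact (eq_empty_iff_forall_notMem.mp hu z) ⟨hzU, hz⟩
  set W : Set ℂ := Subtype.val '' W' with hWdef
  have hWcompact : IsCompact W :=
    (hW'clopen.isClosed.isCompact).image continuous_subtype_val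
  have hWclosed : IsClosed W := hWcompact.isClosed
  obtain ⟨O, hOopen, hO⟩ : ∃ O : Set ℂ, IsOpen O ∧ Subtype.val ⁻¹' O = W' :=
    isOpen_induced_iff.mp hW'clopen.isOpen
  have hWNO : W = N ∩ O := by
    ext y
    constructor
    · rintro ⟨z, hz, rfl⟩
      exact ⟨z.2, by rw [← hO] at hz; exact hz⟩
    · rintro ⟨hyN, hyO⟩
      exact ⟨⟨y, hyN⟩, by rw [← hO]; exact hyO, rfl⟩
  have hWcb : W ⊆ (Metric.closedBall p (ε / 2))ᶜ := by
    rintro y ⟨z, hz, rfl⟩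
    exact hW'U hz
  set O' : Set ℂ := O ∩ (Metric.closedBall p (ε / 2))ᶜ with hO'def
  have hO'open : IsOpen O' := hOopen.inter Metric.isClosed_closedBall.isOpen_compl
  have hWKO' : W = K ∩ O' := by
    apply Subset.antisymm
    · intro y hy
      exact ⟨(hWNO ▸ hy : y ∈ N ∩ O).1.1, (hWNO ▸ hy : y ∈ N ∩ O).2, hWcb hy⟩
    · rintro y ⟨hyK, hyO, hycb⟩
      have hyN : y ∈ N := ⟨hyK, fun hb => hycb (Metric.ball_subset_closedBall hb)⟩
      rw [hWNO]; exact ⟨hyN, hyO⟩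
  have hxW : x ∈ W := ⟨x', hccW' mem_connectedComponent, rfl⟩
  have hpW : p ∉ W := fun h => (hWcb h) (Metric.mem_closedBall_self (by positivity))
  obtain ⟨y, hyK, hyO', hyWc⟩ :=
    hKc O' Wᶜ hO'open hWclosed.isOpen_compl
      (fun y hy => by
        by_cases h : y ∈ W
        · exact Or.inl (hWKO' ▸ h : y ∈ K ∩ O').2
        · exact Or.inr h)
      ⟨x, hx.1, (hWKO' ▸ hxW : x ∈ K ∩ O').2⟩ ⟨p, hp, hpW⟩
  exact hyWc (hWKO'.symm ▸ (⟨hyK, hyO'⟩ : y ∈ K ∩ O') : y ∈ W)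

/-- The closure of a component of `K \ {p}` is the component together with `p`. -/
lemma closure_connectedComponentIn_diff
    {K : Set ℂ} (hK : IsCompact K) (hKc : IsPreconnected K) {p x : ℂ}
    (hp : p ∈ K) (hx : x ∈ K \ {p}) :
    closure (connectedComponentIn (K \ {p}) x) =
      connectedComponentIn (K \ {p}) x ∪ {p} := by
  apply Subset.antisymm
  · intro y hy
    by_cases h : y = p
    · exact Or.inr h
    · refine Or.inl (closure_inter_subset_connectedComponentIn ⟨hy, ?_, h⟩)
      exact closure_minimal ((connectedComponentIn_subset _ _).trans diff_subset)
        hK.isClosed hy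
  · refine union_subset subset_closure ?_
    rw [singleton_subset_iff]
    exact mem_closure_connectedComponentIn_diff hK hKc hp hx

/-- If `q` avoids the components of `u` and `v` in `K \ {p}`, then `u` and `v` lie in the
same component of `K \ {q}`. -/
lemma same_component_of_notMem
    {K : Set ℂ} (hK : IsCompact K) (hKc : IsPreconnected K) {p u v q : ℂ}
    (hp : p ∈ K) (hu : u ∈ K \ {p}) (hv : v ∈ K \ {p}) (hq : q ∈ K \ {p})
    (hqu : q ∉ connectedComponentIn (K \ {p}) u)
    (hqv : q ∉ connectedComponentIn (K \ {p}) v) :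
    connectedComponentIn (K \ {q}) u = connectedComponentIn (K \ {q}) v := by
  set S := (connectedComponentIn (K \ {p}) u ∪ {p}) ∪
    (connectedComponentIn (K \ {p}) v ∪ {p}) with hSdef
  have hconn1 : IsPreconnected (connectedComponentIn (K \ {p}) u ∪ {p}) := by
    rw [← closure_connectedComponentIn_diff hK hKc hp hu]
    exact isPreconnected_connectedComponentIn.closure
  have hconn2 : IsPreconnected (connectedComponentIn (K \ {p}) v ∪ {p}) := by
    rw [← closure_connectedComponentIn_diff hK hKc hp hv]
    exact isPreconnected_connectedComponentIn.closure
  have hSconn : IsPreconnected S :=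
    hconn1.union p (Or.inr rfl) (Or.inr rfl) hconn2
  have hSsub : S ⊆ K \ {q} := by
    rintro y (hy | hy) <;> rcases hy with hy | hy
    · refine ⟨(connectedComponentIn_subset _ _ hy).1, fun h => ?_⟩
      simp only [mem_singleton_iff] at h; exact hqu (h ▸ hy)
    · simp only [mem_singleton_iff] at hy; subst hy
      exact ⟨hp, fun h => hq.2 (mem_singleton_iff.mpr (mem_singleton_iff.mp h).symm)⟩
    · refine ⟨(connectedComponentIn_subset _ _ hy).1, fun h => ?_⟩
      simp only [mem_singleton_iff] at h; exact hqv (h ▸ hy)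
    · simp only [mem_singleton_iff] at hy; subst hy
      exact ⟨hp, fun h => hq.2 (mem_singleton_iff.mpr (mem_singleton_iff.mp h).symm)⟩
  have huS : u ∈ S := Or.inl (Or.inl (mem_connectedComponentIn hu))
  have hvS : v ∈ S := Or.inr (Or.inl (mem_connectedComponentIn hv))
  have hSsubcc : S ⊆ connectedComponentIn (K \ {q}) u :=
    hSconn.subset_connectedComponentIn huS hSsub
  exact connectedComponentIn_eq (hSsubcc hvS)

end Aux

/-- For a compact connected set `K ⊂ ℂ`, the set of points `p ∈ K` such that
`K \ {p}` has at least three connected components is at most countable. -/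
theorem triple_cut_points_countable
    (K : Set ℂ) (hK : IsCompact K) (hKconn : IsConnected K) :
    Set.Countable {p ∈ K | ∃ x y z : ℂ,
      x ∈ K \ {p} ∧ y ∈ K \ {p} ∧ z ∈ K \ {p} ∧
      connectedComponentIn (K \ {p}) x ≠ connectedComponentIn (K \ {p}) y ∧
      connectedComponentIn (K \ {p}) x ≠ connectedComponentIn (K \ {p}) z ∧
      connectedComponentIn (K \ {p}) y ≠ connectedComponentIn (K \ {p}) z} := by
  classical
  have hKc : IsPreconnected K := hKconn.isPreconnected
  set B := {p ∈ K | ∃ x y z : ℂ,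
      x ∈ K \ {p} ∧ y ∈ K \ {p} ∧ z ∈ K \ {p} ∧
      connectedComponentIn (K \ {p}) x ≠ connectedComponentIn (K \ {p}) y ∧
      connectedComponentIn (K \ {p}) x ≠ connectedComponentIn (K \ {p}) z ∧
      connectedComponentIn (K \ {p}) y ≠ connectedComponentIn (K \ {p}) z} with hBdef
  -- a countable dense subset of K
  obtain ⟨s, hsc, hsd⟩ := TopologicalSpace.exists_countable_dense ↥K
  set D : Set ℂ := Subtype.val '' s with hDdef
  have hDK : D ⊆ K := by rintro _ ⟨z, _, rfl⟩; exact z.2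
  have hDc : D.Countable := hsc.image _
  have hDdense : K ⊆ closure D := by
    intro k hk
    have h1 : (⟨k, hk⟩ : ↥K) ∈ closure s := hsd _
    rwa [closure_subtype] at h1
  -- every branch point admits a triple from D in three distinct components
  have key : ∀ p ∈ B, ∃ a b c : ℂ,
      (a ∈ D ∧ a ∈ K \ {p}) ∧ (b ∈ D ∧ b ∈ K \ {p}) ∧ (c ∈ D ∧ c ∈ K \ {p}) ∧
      connectedComponentIn (K \ {p}) a ≠ connectedComponentIn (K \ {p}) b ∧
      connectedComponentIn (K \ {p}) a ≠ connectedComponentIn (K \ {p}) c ∧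
      connectedComponentIn (K \ {p}) b ≠ connectedComponentIn (K \ {p}) c := by
    rintro p ⟨hpK, x, y, z, hx, hy, hz, hxy, hxz, hyz⟩
    set Φ : ℂ → Set ℂ := fun d => connectedComponentIn (K \ {p}) d with hΦdef
    by_contra hcon
    push_neg at hcon
    set T : Set ℂ := D ∩ (K \ {p}) with hTdef
    have hTne : T.Nonempty := by
      by_contra h
      rw [not_nonempty_iff_eq_empty] at h
      have hDp : D ⊆ {p} := by
        intro d hd
        by_contra hdp
        exact eq_empty_iff_forall_notMem.mp h d ⟨hd, hDK hd, hdp⟩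
      have : x ∈ ({p} : Set ℂ) :=
        (closure_minimal hDp isClosed_singleton) (hDdense hx.1)
      exact hx.2 this
    obtain ⟨d0, hd0⟩ := hTne
    by_cases hall : ∀ d ∈ T, Φ d = Φ d0
    · -- all D-points lie in a single component: impossible
      have hDsub : D ⊆ Φ d0 ∪ {p} := by
        intro d hd
        by_cases hdp : d = p
        · exact Or.inr hdp
        · have hdT : d ∈ T := ⟨hd, hDK hd, hdp⟩
          exact Or.inl (hall d hdT ▸ mem_connectedComponentIn hdT.2)
      have hclosed : IsClosed (Φ d0 ∪ {p}) := by
        rw [← closure_connectedComponentIn_diff hK hKc hpK hd0.2]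
        exact isClosed_closure
      have hKsub : K ⊆ Φ d0 ∪ {p} := fun k hk =>
        hclosed.closure_subset (closure_mono hDsub (hDdense hk))
      have hxd : Φ x = Φ d0 :=
        (connectedComponentIn_eq ((hKsub hx.1).resolve_right hx.2)).symm
      have hyd : Φ y = Φ d0 :=
        (connectedComponentIn_eq ((hKsub hy.1).resolve_right hy.2)).symm
      exact hxy (hxd.trans hyd.symm)
    · push_neg at hall
      obtain ⟨d1, hd1T, hd1ne⟩ := hall
      have h2 : ∀ d ∈ T, Φ d = Φ d0 ∨ Φ d = Φ d1 := by
        intro d hd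
        by_contra h
        push_neg at h
        exact hd1ne (hcon d d0 d1 ⟨hd.1, hd.2⟩ ⟨hd0.1, hd0.2⟩ ⟨hd1T.1, hd1T.2⟩
          h.1 h.2).symm
      have hDsub : D ⊆ (Φ d0 ∪ Φ d1) ∪ {p} := by
        intro d hd
        by_cases hdp : d = p
        · exact Or.inr hdp
        · have hdT : d ∈ T := ⟨hd, hDK hd, hdp⟩
          rcases h2 d hdT with h | h
          · exact Or.inl (Or.inl (h ▸ mem_connectedComponentIn hdT.2))
          · exact Or.inl (Or.inr (h ▸ mem_connectedComponentIn hdT.2))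
      have hclosed : IsClosed ((Φ d0 ∪ Φ d1) ∪ {p}) := by
        have : (Φ d0 ∪ Φ d1) ∪ {p} = (Φ d0 ∪ {p}) ∪ (Φ d1 ∪ {p}) := by
          ext w; simp only [mem_union]; tauto
        rw [this, ← closure_connectedComponentIn_diff hK hKc hpK hd0.2,
          ← closure_connectedComponentIn_diff hK hKc hpK hd1T.2]
        exact isClosed_closure.union isClosed_closure
      have hKsub : K ⊆ (Φ d0 ∪ Φ d1) ∪ {p} := fun k hk =>
        hclosed.closure_subset (closure_mono hDsub (hDdense hk))
      have hval : ∀ w : ℂ, w ∈ K \ {p} → Φ w = Φ d0 ∨ Φ w = Φ d1 := by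
        intro w hw
        rcases (hKsub hw.1).resolve_right hw.2 with h | h
        · exact Or.inl (connectedComponentIn_eq h).symm
        · exact Or.inr (connectedComponentIn_eq h).symm
      rcases hval x hx with h1 | h1 <;> rcases hval y hy with h2 | h2 <;>
        rcases hval z hz with h3 | h3
      · exact hxy (h1.trans h2.symm)
      · exact hxy (h1.trans h2.symm)
      · exact hxz (h1.trans h3.symm)
      · exact hyz (h2.trans h3.symm)
      · exact hyz (h2.trans h3.symm)
      · exact hxz (h1.trans h3.symm)
      · exact hxy (h1.trans h2.symm)
      · exact hxy (h1.trans h2.symm)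
  choose! a b c hmem using key
  have hinj : Set.InjOn (fun p => (a p, b p, c p)) B := by
    intro p hp q hq heq
    by_contra hpq
    obtain ⟨⟨haD, haK⟩, ⟨hbD, hbK⟩, ⟨hcD, hcK⟩, hab, hac, hbc⟩ := hmem p hp
    obtain ⟨⟨haD', haK'⟩, ⟨hbD', hbK'⟩, ⟨hcD', hcK'⟩, hab', hac', hbc'⟩ := hmem q hq
    simp only [Prod.mk.injEq] at heq
    obtain ⟨hea, heb, hec⟩ := heq
    have hqK : q ∈ K := hq.1
    have hqKp : q ∈ K \ {p} := ⟨hqK, fun h => hpq (mem_singleton_iff.mp h).symm⟩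
    set Φ : ℂ → Set ℂ := fun d => connectedComponentIn (K \ {p}) d with hΦdef
    -- pick two of the three points whose p-components avoid q
    have main : ∀ u v : ℂ, u ∈ K \ {p} → v ∈ K \ {p} → Φ u ≠ Φ v →
        Φ u ≠ Φ q → Φ v ≠ Φ q →
        connectedComponentIn (K \ {q}) u = connectedComponentIn (K \ {q}) v := by
      intro u v huK hvK _ huq hvq
      refine same_component_of_notMem hK hKc hp.1 huK hvK hqKp ?_ ?_
      · exact fun h => huq (connectedComponentIn_eq h)
      · exact fun h => hvq (connectedComponentIn_eq h)
    rw [← hea] at haK' hab' hac'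
    rw [← heb] at hbK' hab' hbc'
    rw [← hec] at hcK' hac' hbc'
    by_cases h1 : Φ (a p) = Φ q
    · -- use b p and c p
      have hb : Φ (b p) ≠ Φ q := fun h => hab (h1.trans h.symm)
      have hc : Φ (c p) ≠ Φ q := fun h => hac (h1.trans h.symm)
      exact hbc' (main _ _ hbK hcK hbc hb hc)
    · by_cases h2 : Φ (b p) = Φ q
      · have hc : Φ (c p) ≠ Φ q := fun h => hbc (h2.trans h.symm)
        exact hac' (main _ _ haK hcK hac h1 hc)
      · exact hab' (main _ _ haK hbK hab h1 h2)
  have hmaps : Set.MapsTo (fun p => (a p, b p, c p)) B (D ×ˢ D ×ˢ D) := by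
    intro p hp
    obtain ⟨⟨haD, _⟩, ⟨hbD, _⟩, ⟨hcD, _⟩, _⟩ := hmem p hp
    exact ⟨haD, hbD, hcD⟩
  exact hmaps.countable_of_injOn hinj (hDc.prod (hDc.prod hDc))
end

section
/- Let W be the wake of a ray pair landing at a biaccessible point z ≠ α of the Julia set of a quadratic polynomial f(z) = z² + c, with z not the critical point. Then the angle a(W) satisfies a(W) ≠ 1/2, and a(W) > 1/2 if and only if W contains the critical point 0. -/
open Complex

/-- The quadratic polynomial `f(z) = z² + c`. -/
def fc (c : ℂ) : ℂ → ℂ := fun z => z ^ 2 + c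

/-- The filled Julia set: points with bounded forward orbit. -/
def filledJulia (c : ℂ) : Set ℂ :=
  {z : ℂ | ∃ M : ℝ, ∀ n : ℕ, ‖(fc c)^[n] z‖ ≤ M}

/-- The Julia set: the boundary of the filled Julia set. -/
def julia (c : ℂ) : Set ℂ := frontier (filledJulia c)

/-- The external ray of angle `t` (in turns), defined through the Böttcher map `φ`:
points outside the filled Julia set sent by `φ` to the radial line of angle `2πt`. -/
def extRay (c : ℂ) (φ : ℂ → ℂ) (t : ℝ) : Set ℂ :=
  {z : ℂ | z ∉ filledJulia c ∧
    ∃ r : ℝ, 1 < r ∧ φ z = (r : ℂ) * Complex.exp (2 * Real.pi * Complex.I * (t : ℂ))}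

/-- The external ray of angle `t` lands at `z` if `z` is the unique point added in
the closure of the ray. -/
def landsAt (c : ℂ) (φ : ℂ → ℂ) (t : ℝ) (z : ℂ) : Prop :=
  closure (extRay c φ t) = extRay c φ t ∪ {z}

/-- `IsBottcher c φ`: `φ` is the Böttcher map of `f(z) = z² + c`, i.e. a continuous
bijection from the complement of the filled Julia set onto the complement of the
closed unit disk conjugating `f` to the squaring map. -/
structure IsBottcher (c : ℂ) (φ : ℂ → ℂ) : Prop where
  bijOn : Set.BijOn φ (filledJulia c)ᶜ {w : ℂ | 1 < ‖w‖}
  continuousOn : ContinuousOn φ (filledJulia c)ᶜ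
  conj : ∀ z ∉ filledJulia c, φ (fc c z) = (φ z) ^ 2

/-- `IsWake c φ t t' z W`: `W` is the wake of the ray pair `(R_t, R_{t'})` landing at
`z`: a connected component of the complement of `R_t ∪ R_{t'} ∪ {z}`. -/
def IsWake (c : ℂ) (φ : ℂ → ℂ) (t t' : ℝ) (z : ℂ) (W : Set ℂ) : Prop :=
  ∃ w ∈ (extRay c φ t ∪ extRay c φ t' ∪ {z})ᶜ,
    W = connectedComponentIn (extRay c φ t ∪ extRay c φ t' ∪ {z})ᶜ w

/-- The angle of a wake `W`: the normalized measure of the set of angles whose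
external rays are contained in `W`. -/
noncomputable def wakeAngle (c : ℂ) (φ : ℂ → ℂ) (W : Set ℂ) : ℝ :=
  (MeasureTheory.volume {t : ℝ | t ∈ Set.Ico (0 : ℝ) 1 ∧ extRay c φ t ⊆ W}).toReal

noncomputable def Complex.abs : AbsoluteValue ℂ ℝ where
  toFun z := ‖z‖
  map_mul' := norm_mul
  nonneg' := norm_nonneg
  eq_zero' _ := norm_eq_zero
  add_le' := norm_add_le

lemma Complex.abs_ofReal (r : ℝ) : Complex.abs (r : ℂ) = |r| := by
  show ‖(r : ℂ)‖ = |r|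
  simp

lemma Complex.continuous_abs : Continuous Complex.abs := continuous_norm

lemma Complex.abs_exp (z : ℂ) : Complex.abs (Complex.exp z) = Real.exp z.re :=
  Complex.norm_exp z

lemma Complex.abs_mul_exp_arg_mul_I (x : ℂ) :
    (Complex.abs x : ℂ) * Complex.exp (Complex.arg x * Complex.I) = x :=
  Complex.norm_mul_exp_arg_mul_I x

namespace WakeProof

noncomputable def R1 (c : ℂ) : ℝ := Complex.abs c + 2

lemma R1_ge_two (c : ℂ) : 2 ≤ R1 c := by
  have := Complex.abs.nonneg c; unfold R1; linarith

lemma growth (c : ℂ) {y : ℂ} (hy : R1 c ≤ Complex.abs y) :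
    Complex.abs y + 1 ≤ Complex.abs (fc c y) := by
  have h1 : Complex.abs (y ^ 2) - Complex.abs c ≤ Complex.abs (y ^ 2 + c) := by
    have h := Complex.abs.add_le (y ^ 2 + c) (-c)
    rw [add_neg_cancel_right, AbsoluteValue.map_neg] at h
    linarith
  have h2 : Complex.abs (y ^ 2) = Complex.abs y ^ 2 := map_pow Complex.abs y 2
  have hc := Complex.abs.nonneg c
  have hR : Complex.abs c + 2 ≤ Complex.abs y := hy
  have h3 : Complex.abs y + 1 + Complex.abs c ≤ Complex.abs y ^ 2 := by
    nlinarith [Complex.abs.nonneg y]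
  show Complex.abs y + 1 ≤ Complex.abs (y ^ 2 + c)
  linarith

lemma growth_iter (c : ℂ) {y : ℂ} (hy : R1 c ≤ Complex.abs y) (n : ℕ) :
    Complex.abs y + n ≤ Complex.abs ((fc c)^[n] y) := by
  induction n with
  | zero => simp
  | succ n ih =>
    have hyn : R1 c ≤ Complex.abs ((fc c)^[n] y) := by
      have : (n : ℝ) ≥ 0 := Nat.cast_nonneg n
      linarith
    have := growth c hyn
    rw [Function.iterate_succ_apply']
    push_cast
    linarith

lemma escapes (c : ℂ) {x : ℂ} {n : ℕ} (h : R1 c ≤ Complex.abs ((fc c)^[n] x)) :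
    x ∉ filledJulia c := by
  rintro ⟨M, hM⟩
  obtain ⟨k, hk⟩ := exists_nat_gt (M - R1 c)
  have := growth_iter c h k
  rw [← Function.iterate_add_apply] at this
  have : Complex.abs ((fc c)^[k + n] x) ≤ M := hM (k + n)
  linarith

lemma mem_filledJulia_iff (c : ℂ) {x : ℂ} :
    x ∈ filledJulia c ↔ ∀ n, Complex.abs ((fc c)^[n] x) ≤ R1 c := by
  constructor
  · intro hx n
    by_contra h
    push_neg at h
    exact escapes c h.le hx
  · intro h
    exact ⟨R1 c, h⟩

lemma isClosed_filledJulia (c : ℂ) : IsClosed (filledJulia c) := by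
  have : filledJulia c = ⋂ n, {x : ℂ | Complex.abs ((fc c)^[n] x) ≤ R1 c} := by
    ext x
    simp [mem_filledJulia_iff c, Set.mem_iInter]
  rw [this]
  refine isClosed_iInter fun n => ?_
  have hcont : Continuous fun x : ℂ => Complex.abs ((fc c)^[n] x) := by
    have hfc : Continuous (fc c) := by unfold fc; continuity
    exact Complex.continuous_abs.comp (hfc.iterate n)
  exact isClosed_le hcont continuous_const

lemma isOpen_compl_filledJulia (c : ℂ) : IsOpen (filledJulia c)ᶜ :=
  (isClosed_filledJulia c).isOpen_compl

lemma filledJulia_bounded (c : ℂ) {x : ℂ} (hx : x ∈ filledJulia c) :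
    Complex.abs x ≤ R1 c := by
  simpa using (mem_filledJulia_iff c).mp hx 0

lemma fc_neg (c : ℂ) (x : ℂ) : fc c (-x) = fc c x := by unfold fc; ring_nf

lemma iterate_neg (c : ℂ) (x : ℂ) (n : ℕ) (hn : n ≠ 0) :
    (fc c)^[n] (-x) = (fc c)^[n] x := by
  obtain ⟨m, rfl⟩ := Nat.exists_eq_succ_of_ne_zero hn
  rw [Function.iterate_succ_apply, Function.iterate_succ_apply, fc_neg]

lemma filledJulia_neg (c : ℂ) {x : ℂ} : -x ∈ filledJulia c ↔ x ∈ filledJulia c := by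
  simp only [mem_filledJulia_iff]
  constructor <;> intro h n <;> rcases Nat.eq_zero_or_pos n with hn | hn
  · subst hn; simpa using h 0
  · rw [← iterate_neg c x n hn.ne']; exact h n
  · subst hn; simpa using h 0
  · rw [iterate_neg c x n hn.ne']; exact h n

lemma alpha_mem_filledJulia (c : ℂ) {α : ℂ} (hα : fc c α = α) : α ∈ filledJulia c := by
  have hit : ∀ n, (fc c)^[n] α = α := by
    intro n; induction n with
    | zero => rfl
    | succ n ih => rw [Function.iterate_succ_apply', ih, hα]
  rw [mem_filledJulia_iff]
  intro n
  rw [hit]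
  by_contra h
  push_neg at h
  have := growth c h.le
  rw [show fc c α = α from hα] at this
  linarith

lemma julia_subset_filledJulia (c : ℂ) : julia c ⊆ filledJulia c := by
  intro x hx
  have h1 : x ∈ closure (filledJulia c) := frontier_subset_closure hx
  rwa [(isClosed_filledJulia c).closure_eq] at h1

lemma fc_not_mem_filledJulia (c : ℂ) {x : ℂ} (hx : x ∉ filledJulia c) :
    fc c x ∉ filledJulia c := by
  rw [mem_filledJulia_iff] at hx ⊢
  push_neg at hx ⊢
  obtain ⟨n, hn⟩ := hx
  rcases Nat.eq_zero_or_pos n with h0 | hpos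
  · subst h0
    refine ⟨0, ?_⟩
    simp only [Function.iterate_zero_apply] at hn ⊢
    have := growth c hn.le
    linarith
  · obtain ⟨m, rfl⟩ := Nat.exists_eq_succ_of_ne_zero hpos.ne'
    refine ⟨m, ?_⟩
    rwa [← Function.iterate_succ_apply]

lemma iterate_not_mem_filledJulia (c : ℂ) {x : ℂ} (hx : x ∉ filledJulia c) (n : ℕ) :
    (fc c)^[n] x ∉ filledJulia c := by
  induction n with
  | zero => exact hx
  | succ n ih => rw [Function.iterate_succ_apply']; exact fc_not_mem_filledJulia c ih

end WakeProof

namespace WakeProof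

noncomputable def e (s : ℝ) : ℂ := Complex.exp (2 * Real.pi * Complex.I * (s : ℂ))

lemma abs_e (s : ℝ) : Complex.abs (e s) = 1 := by
  unfold e
  rw [Complex.abs_exp]
  have : (2 * (Real.pi : ℂ) * Complex.I * (s : ℂ)).re = 0 := by
    simp [Complex.mul_re, Complex.mul_im]
  rw [show 2 * (Real.pi : ℂ) * Complex.I * (s:ℂ) = 2 * (Real.pi:ℂ) * Complex.I * (s:ℂ) from rfl] at this
  rw [show (2 * Real.pi * Complex.I * (s : ℂ)) = (2 * (Real.pi:ℂ) * Complex.I * (s:ℂ)) by push_cast; ring]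
  rw [this, Real.exp_zero]

lemma e_ne_zero (s : ℝ) : e s ≠ 0 := Complex.exp_ne_zero _

lemma e_add (s u : ℝ) : e (s + u) = e s * e u := by
  unfold e
  rw [← Complex.exp_add]
  push_cast
  ring_nf

lemma e_half : e (1/2 : ℝ) = -1 := by
  unfold e
  have h : (((1:ℝ)/2 : ℝ) : ℂ) = 1/2 := by norm_num
  rw [h, show (2 * Real.pi * Complex.I * (1/2 : ℂ) : ℂ) = Real.pi * Complex.I by ring]
  exact Complex.exp_pi_mul_I

lemma e_int (n : ℤ) : e (n : ℝ) = 1 := by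
  unfold e
  rw [show (2 * Real.pi * Complex.I * ((n:ℝ) : ℂ) : ℂ) = (n : ℂ) * (2 * Real.pi * Complex.I) by push_cast; ring]
  exact Complex.exp_int_mul_two_pi_mul_I n

lemma e_eq_iff {s s' : ℝ} : e s = e s' ↔ ∃ n : ℤ, s = s' + n := by
  unfold e
  rw [Complex.exp_eq_exp_iff_exists_int]
  constructor
  · rintro ⟨n, hn⟩
    refine ⟨n, ?_⟩
    have hne : (2 * Real.pi * Complex.I : ℂ) ≠ 0 := by
      simp [Complex.I_ne_zero, Real.pi_ne_zero]
    have : (2 * Real.pi * Complex.I : ℂ) * s = (2 * Real.pi * Complex.I) * (s' + n) := by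
      rw [hn]; push_cast; ring
    have h2 := mul_left_cancel₀ hne this
    have h3 : (s : ℂ) = ((s' + n : ℝ) : ℂ) := by rw [h2]; push_cast; ring
    exact_mod_cast h3
  · rintro ⟨n, rfl⟩
    exact ⟨n, by push_cast; ring⟩

lemma e_eq_of_int_diff {s s' : ℝ} (n : ℤ) (h : s = s' + n) : e s = e s' :=
  e_eq_iff.mpr ⟨n, h⟩

lemma e_half_add (s : ℝ) : e (s + 1/2) = - e s := by
  rw [e_add, e_half]; ring

/-- polar uniqueness -/
lemma polar_unique {r r' s s' : ℝ} (hr : 0 < r) (hr' : 0 < r')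
    (h : (r : ℂ) * e s = (r' : ℂ) * e s') : r = r' ∧ e s = e s' := by
  have habs : r = r' := by
    have := congrArg Complex.abs h
    rwa [map_mul, map_mul, abs_e, abs_e, mul_one, mul_one,
      Complex.abs_ofReal, Complex.abs_ofReal, abs_of_pos hr, abs_of_pos hr'] at this
  subst habs
  refine ⟨rfl, ?_⟩
  have hrC : (r : ℂ) ≠ 0 := by exact_mod_cast hr.ne'
  exact mul_left_cancel₀ hrC h

lemma mem_extRay_iff {c : ℂ} {φ : ℂ → ℂ} {s : ℝ} {x : ℂ} :
    x ∈ extRay c φ s ↔ x ∉ filledJulia c ∧ ∃ r : ℝ, 1 < r ∧ φ x = (r : ℂ) * e s :=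
  Iff.rfl

lemma extRay_congr {c : ℂ} {φ : ℂ → ℂ} {s s' : ℝ} (h : e s = e s') :
    extRay c φ s = extRay c φ s' := by
  ext x
  rw [mem_extRay_iff, mem_extRay_iff, h]

lemma extRay_subset_compl {c : ℂ} {φ : ℂ → ℂ} {s : ℝ} :
    extRay c φ s ⊆ (filledJulia c)ᶜ := fun _ hx => hx.1

lemma extRay_disjoint {c : ℂ} {φ : ℂ → ℂ} {s s' : ℝ} (h : e s ≠ e s') :
    extRay c φ s ∩ extRay c φ s' = ∅ := by
  ext x
  simp only [Set.mem_inter_iff, Set.mem_empty_iff_false, iff_false]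
  rintro ⟨⟨-, r, hr, hx⟩, ⟨-, r', hr', hx'⟩⟩
  rw [hx] at hx'
  exact h (polar_unique (by linarith) (by linarith) hx').2

lemma extRay_ne_imp_e_ne {c : ℂ} {φ : ℂ → ℂ} {s s' : ℝ}
    (h : extRay c φ s ≠ extRay c φ s') : e s ≠ e s' := fun he => h (extRay_congr he)

/-- `0` belongs to the filled Julia set. -/
lemma zero_mem_filledJulia {c : ℂ} {φ : ℂ → ℂ} (hφ : IsBottcher c φ) :
    (0 : ℂ) ∈ filledJulia c := by
  by_contra h0
  have h0' : (0 : ℂ) ∈ (filledJulia c)ᶜ := h0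
  have hv : φ 0 ∈ {w : ℂ | 1 < Complex.abs w} := hφ.bijOn.mapsTo h0'
  have hφ0 : φ 0 ≠ 0 := by
    intro h; rw [h] at hv; simp at hv; linarith [hv]
  have hnv : -φ 0 ∈ {w : ℂ | 1 < Complex.abs w} := by
    simpa using hv
  obtain ⟨u, hu, huv⟩ := hφ.bijOn.surjOn hnv
  have hune : u ≠ 0 := by
    rintro rfl
    exact hφ0 (CharZero.eq_neg_self_iff.mp huv)
  have hnu : -u ∈ (filledJulia c)ᶜ := by
    simp only [Set.mem_compl_iff]
    rw [filledJulia_neg]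
    exact hu
  have hsq : φ (-u) ^ 2 = φ u ^ 2 := by
    rw [← hφ.conj u hu, ← hφ.conj (-u) hnu, fc_neg]
  have hcases : (φ (-u) - φ u) * (φ (-u) + φ u) = 0 := by linear_combination hsq
  rcases mul_eq_zero.mp hcases with h | h
  · have heq : φ (-u) = φ u := sub_eq_zero.mp h
    have := hφ.bijOn.injOn hnu hu heq
    exact hune (CharZero.neg_eq_self_iff.mp this)
  · have heq : φ (-u) = φ 0 := by
      have h1 : φ (-u) = -φ u := eq_neg_of_add_eq_zero_left h
      rw [h1, huv, neg_neg]
    have := hφ.bijOn.injOn hnu h0' heq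
    exact hune (by simpa [neg_eq_zero] using this)

/-- φ is odd on the complement of the filled Julia set. -/
lemma phi_neg {c : ℂ} {φ : ℂ → ℂ} (hφ : IsBottcher c φ) {x : ℂ}
    (hx : x ∉ filledJulia c) : φ (-x) = -φ x := by
  have hx' : x ∈ (filledJulia c)ᶜ := hx
  have hnx : -x ∈ (filledJulia c)ᶜ := by
    simp only [Set.mem_compl_iff]
    rw [filledJulia_neg]
    exact hx
  have hsq : φ (-x) ^ 2 = φ x ^ 2 := by
    rw [← hφ.conj x hx, ← hφ.conj (-x) hnx, fc_neg]
  have hcases : (φ (-x) - φ x) * (φ (-x) + φ x) = 0 := by linear_combination hsq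
  rcases mul_eq_zero.mp hcases with h | h
  · exfalso
    have heq : φ (-x) = φ x := sub_eq_zero.mp h
    have h2 := hφ.bijOn.injOn hnx hx' heq
    have hx0 : x = 0 := CharZero.neg_eq_self_iff.mp h2
    rw [hx0] at hx
    exact hx (zero_mem_filledJulia hφ)
  · exact eq_neg_of_add_eq_zero_left h

end WakeProof

namespace WakeProof

lemma fc_mem_filledJulia {c : ℂ} {x : ℂ} (hx : x ∈ filledJulia c) :
    fc c x ∈ filledJulia c := by
  rw [mem_filledJulia_iff] at hx ⊢
  intro n
  rw [← Function.iterate_succ_apply]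
  exact hx (n + 1)

lemma phi_iterate {c : ℂ} {φ : ℂ → ℂ} (hφ : IsBottcher c φ) {x : ℂ}
    (hx : x ∉ filledJulia c) (n : ℕ) : φ ((fc c)^[n] x) = φ x ^ 2 ^ n := by
  induction n with
  | zero => simp
  | succ n ih =>
    rw [Function.iterate_succ_apply', hφ.conj _ (iterate_not_mem_filledJulia c hx n), ih,
      ← pow_mul, pow_succ]

/-- The shell between radius R1 and R1^4; a compact subset of the complement. -/
def shell (c : ℂ) : Set ℂ := {y : ℂ | R1 c ≤ Complex.abs y ∧ Complex.abs y ≤ (R1 c) ^ 4}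

lemma shell_subset_compl (c : ℂ) : shell c ⊆ (filledJulia c)ᶜ := by
  intro y hy
  exact escapes c (n := 0) (by simpa using hy.1)

lemma shell_compact (c : ℂ) : IsCompact (shell c) := by
  have : shell c = Complex.abs ⁻¹' (Set.Icc (R1 c) ((R1 c)^4)) := rfl
  rw [this]
  apply Metric.isCompact_of_isClosed_isBounded
  · exact IsClosed.preimage Complex.continuous_abs isClosed_Icc
  · apply Bornology.IsBounded.subset (Metric.isBounded_closedBall (x := (0:ℂ)) (r := (R1 c)^4))
    intro y hy
    simp only [Metric.mem_closedBall, Complex.dist_eq, sub_zero]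
    exact hy.2

lemma R1_le_pow4 (c : ℂ) : R1 c ≤ (R1 c) ^ 4 := by
  have h2 := R1_ge_two c
  nlinarith [sq_nonneg (R1 c), sq_nonneg (R1 c - 1), sq_nonneg (R1 c ^ 2 - 1)]

lemma shell_nonempty (c : ℂ) : (shell c).Nonempty := by
  have h2 := R1_ge_two c
  refine ⟨(R1 c : ℂ), ?_, ?_⟩
  · rw [Complex.abs_ofReal, abs_of_pos (by linarith)]
  · rw [Complex.abs_ofReal, abs_of_pos (by linarith)]
    exact R1_le_pow4 c

/-- minimum modulus of φ on the shell. -/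
lemma exists_min_shell {c : ℂ} {φ : ℂ → ℂ} (hφ : IsBottcher c φ) :
    ∃ m₀ : ℝ, 1 < m₀ ∧ ∀ y ∈ shell c, m₀ ≤ Complex.abs (φ y) := by
  obtain ⟨y₀, hy₀, hmin⟩ := (shell_compact c).exists_isMinOn (shell_nonempty c)
    ((Complex.continuous_abs.comp_continuousOn (hφ.continuousOn.mono (shell_subset_compl c))))
  refine ⟨Complex.abs (φ y₀), ?_, fun y hy => hmin hy⟩
  exact hφ.bijOn.mapsTo (shell_subset_compl c hy₀)

/-- A preimage of x under fc. -/
noncomputable def pre (c : ℂ) (x : ℂ) : ℂ := (x - c) ^ ((1 : ℂ)/2)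

lemma pre_sq {c x : ℂ} (hx : x ≠ c) : (pre c x) ^ 2 = x - c := by
  unfold pre
  have hne : x - c ≠ 0 := sub_ne_zero.mpr hx
  rw [sq, ← Complex.cpow_add _ _ hne]
  norm_num

lemma fc_pre {c x : ℂ} (hx : x ≠ c) : fc c (pre c x) = x := by
  unfold fc
  rw [pre_sq hx]
  ring

lemma abs_pre_sq {c x : ℂ} (hx : x ≠ c) :
    Complex.abs (pre c x) ^ 2 = Complex.abs (x - c) := by
  rw [← map_pow, pre_sq hx]

lemma pre_not_mem {c x : ℂ} (hx : x ∉ filledJulia c) (hxc : x ≠ c) :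
    pre c x ∉ filledJulia c := by
  intro h
  have := fc_mem_filledJulia h
  rw [fc_pre hxc] at this
  exact hx this

lemma abs_phi_pre {c : ℂ} {φ : ℂ → ℂ} (hφ : IsBottcher c φ) {x : ℂ}
    (hx : x ∉ filledJulia c) (hxc : x ≠ c) :
    Complex.abs (φ (pre c x)) ^ 2 = Complex.abs (φ x) := by
  have h1 := hφ.conj (pre c x) (pre_not_mem hx hxc)
  rw [fc_pre hxc] at h1
  rw [← map_pow, ← h1]

lemma abs_c_lt_R1 (c : ℂ) : Complex.abs c < R1 c := by unfold R1; linarith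

/-- Claim A : modulus of φ at least the shell minimum everywhere far out. -/
lemma claimA {c : ℂ} {φ : ℂ → ℂ} (hφ : IsBottcher c φ) {m₀ : ℝ} (hm : 1 < m₀)
    (hmin : ∀ y ∈ shell c, m₀ ≤ Complex.abs (φ y)) :
    ∀ x, x ∉ filledJulia c → R1 c ≤ Complex.abs x → m₀ ≤ Complex.abs (φ x) := by
  suffices H : ∀ n : ℕ, ∀ x, x ∉ filledJulia c → Complex.abs x ≤ n → R1 c ≤ Complex.abs x →
      m₀ ≤ Complex.abs (φ x) by
    intro x hx hR
    obtain ⟨n, hn⟩ := exists_nat_gt (Complex.abs x)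
    exact H n x hx hn.le hR
  intro n
  induction n with
  | zero =>
    intro x _ hx0 hR
    have := R1_ge_two c
    simp only [Nat.cast_zero] at hx0
    linarith
  | succ n ih =>
    intro x hx hxn hR
    by_cases hsh : Complex.abs x ≤ (R1 c) ^ 4
    · exact hmin x ⟨hR, hsh⟩
    · push_neg at hsh
      have h2 := R1_ge_two c
      have hcabs := Complex.abs.nonneg c
      have hcR := abs_c_lt_R1 c
      have hR14 := R1_le_pow4 c
      have hxc : x ≠ c := by
        intro h
        rw [h] at hsh
        linarith
      have hy2 : Complex.abs (pre c x) ^ 2 = Complex.abs (x - c) := abs_pre_sq hxc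
      have hge : Complex.abs x - Complex.abs c ≤ Complex.abs (x - c) := by
        have h := Complex.abs.add_le (x - c) c
        rw [sub_add_cancel] at h
        linarith
      have hle : Complex.abs (x - c) ≤ Complex.abs x + Complex.abs c := by
        have h := Complex.abs.add_le x (-c)
        rw [AbsoluteValue.map_neg] at h
        simpa [sub_eq_add_neg] using h
      have hsq4 : (4:ℝ) ≤ R1 c ^ 2 := by nlinarith
      have h16 : (16:ℝ) ≤ R1 c ^ 4 := by nlinarith [sq_nonneg (R1 c ^ 2 - 4)]
      have hyR : R1 c ≤ Complex.abs (pre c x) := by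
        by_contra hcon
        push_neg at hcon
        have hnn := Complex.abs.nonneg (pre c x)
        have hsq : Complex.abs (pre c x) ^ 2 < R1 c ^ 2 := by nlinarith
        nlinarith [sq_nonneg (R1 c), sq_nonneg (R1 c ^ 2 - R1 c - 1)]
      have hyn : Complex.abs (pre c x) ≤ n := by
        have hx1 : Complex.abs (pre c x) ≤ Complex.abs x - 1 := by
          by_contra hcon
          push_neg at hcon
          have hnn := Complex.abs.nonneg (pre c x)
          have hx1' : (16:ℝ) ≤ Complex.abs x := by linarith
          have hsq : (Complex.abs x - 1) ^ 2 < Complex.abs (pre c x) ^ 2 := by nlinarith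
          nlinarith
        have : Complex.abs x ≤ n + 1 := by exact_mod_cast hxn
        linarith
      have hphi := ih (pre c x) (pre_not_mem hx hxc) hyn hyR
      have := abs_phi_pre hφ hx hxc
      nlinarith

/-- radius thresholds for the cascade. -/
noncomputable def gg (c : ℂ) : ℕ → ℝ
  | 0 => R1 c
  | k + 1 => (gg c k) ^ 2 + Complex.abs c

lemma gg_ge (c : ℂ) (k : ℕ) : R1 c ≤ gg c k := by
  induction k with
  | zero => exact le_refl _
  | succ k ih =>
    have h2 := R1_ge_two c
    have := Complex.abs.nonneg c
    show R1 c ≤ (gg c k) ^ 2 + Complex.abs c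
    nlinarith

lemma cascade {c : ℂ} {φ : ℂ → ℂ} (hφ : IsBottcher c φ) {m₀ : ℝ} (hm : 1 < m₀)
    (hmin : ∀ y ∈ shell c, m₀ ≤ Complex.abs (φ y)) :
    ∀ k : ℕ, ∀ x, x ∉ filledJulia c → gg c k ≤ Complex.abs x →
      m₀ ^ 2 ^ k ≤ Complex.abs (φ x) := by
  intro k
  induction k with
  | zero =>
    intro x hx hgx
    simpa using claimA hφ hm hmin x hx hgx
  | succ k ih =>
    intro x hx hgx
    have h2 := R1_ge_two c
    have hggk := gg_ge c k
    have hcabs := Complex.abs.nonneg c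
    have hgx' : (gg c k) ^ 2 + Complex.abs c ≤ Complex.abs x := hgx
    have hxc : x ≠ c := by
      intro h
      rw [h] at hgx'
      nlinarith [gg_ge c k]
    have hy2 : Complex.abs (pre c x) ^ 2 = Complex.abs (x - c) := abs_pre_sq hxc
    have hge : Complex.abs x - Complex.abs c ≤ Complex.abs (x - c) := by
      have h := Complex.abs.add_le (x - c) c
      rw [sub_add_cancel] at h
      linarith
    have hyg : gg c k ≤ Complex.abs (pre c x) := by
      by_contra hcon
      push_neg at hcon
      have hnn := Complex.abs.nonneg (pre c x)
      have hggnn : 0 < gg c k := by linarith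
      have hsq : Complex.abs (pre c x) ^ 2 < gg c k ^ 2 := by nlinarith
      nlinarith
    have hphi := ih (pre c x) (pre_not_mem hx hxc) hyg
    have habs := abs_phi_pre hφ hx hxc
    have hm0 : (0:ℝ) ≤ m₀ ^ 2 ^ k := by positivity
    calc m₀ ^ 2 ^ (k+1) = (m₀ ^ 2 ^ k) ^ 2 := by rw [← pow_mul, pow_succ]
    _ ≤ Complex.abs (φ (pre c x)) ^ 2 := by nlinarith
    _ = Complex.abs (φ x) := habs

end WakeProof

namespace WakeProof

def shell2 (c : ℂ) : Set ℂ :=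
  {y : ℂ | R1 c ≤ Complex.abs y ∧ Complex.abs y ≤ (R1 c) ^ 2 + Complex.abs c}

lemma shell2_subset_compl (c : ℂ) : shell2 c ⊆ (filledJulia c)ᶜ := by
  intro y hy
  exact escapes c (n := 0) (by simpa using hy.1)

lemma shell2_compact (c : ℂ) : IsCompact (shell2 c) := by
  have : shell2 c = Complex.abs ⁻¹' (Set.Icc (R1 c) ((R1 c)^2 + Complex.abs c)) := rfl
  rw [this]
  apply Metric.isCompact_of_isClosed_isBounded
  · exact IsClosed.preimage Complex.continuous_abs isClosed_Icc
  · apply Bornology.IsBounded.subset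
      (Metric.isBounded_closedBall (x := (0:ℂ)) (r := (R1 c)^2 + Complex.abs c))
    intro y hy
    simp only [Metric.mem_closedBall, Complex.dist_eq, sub_zero]
    exact hy.2

lemma shell2_nonempty (c : ℂ) : (shell2 c).Nonempty := by
  have h2 := R1_ge_two c
  have hc := Complex.abs.nonneg c
  refine ⟨(R1 c : ℂ), ?_, ?_⟩
  · rw [Complex.abs_ofReal, abs_of_pos (by linarith)]
  · rw [Complex.abs_ofReal, abs_of_pos (by linarith)]
    nlinarith

lemma exists_max_shell2 {c : ℂ} {φ : ℂ → ℂ} (hφ : IsBottcher c φ) :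
    ∃ M₂ : ℝ, ∀ y ∈ shell2 c, Complex.abs (φ y) ≤ M₂ := by
  obtain ⟨y₀, _, hmax⟩ := (shell2_compact c).exists_isMaxOn (shell2_nonempty c)
    ((Complex.continuous_abs.comp_continuousOn (hφ.continuousOn.mono (shell2_subset_compl c))))
  exact ⟨Complex.abs (φ y₀), fun y hy => hmax hy⟩

lemma bounded_of_phi_bounded {c : ℂ} {φ : ℂ → ℂ} (hφ : IsBottcher c φ) (M : ℝ) :
    ∃ B : ℝ, ∀ x, x ∉ filledJulia c → Complex.abs (φ x) ≤ M → Complex.abs x ≤ B := by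
  obtain ⟨m₀, hm, hmin⟩ := exists_min_shell hφ
  obtain ⟨k, hk⟩ := pow_unbounded_of_one_lt M hm
  refine ⟨gg c k, ?_⟩
  intro x hx hM
  by_contra h
  push_neg at h
  have hc := cascade hφ hm hmin k x hx h.le
  have hkk : m₀ ^ k ≤ m₀ ^ 2 ^ k :=
    pow_le_pow_right₀ hm.le (Nat.le_of_lt (Nat.lt_two_pow_self (n := k)))
  linarith

/-- φ is proper : preimages of compact subsets of the exterior disk are compact. -/
lemma phi_proper {c : ℂ} {φ : ℂ → ℂ} (hφ : IsBottcher c φ) {Q : Set ℂ}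
    (hQ : IsCompact Q) (hQV : Q ⊆ {w : ℂ | 1 < Complex.abs w}) :
    IsCompact ((filledJulia c)ᶜ ∩ φ ⁻¹' Q) := by
  rcases Q.eq_empty_or_nonempty with rfl | hne
  · simp only [Set.preimage_empty, Set.inter_empty]
    exact isCompact_empty
  obtain ⟨w₁, hw₁Q, hw₁min⟩ := hQ.exists_isMinOn hne Complex.continuous_abs.continuousOn
  set m₁ := Complex.abs w₁ with hm₁def
  have hm₁ : 1 < m₁ := hQV hw₁Q
  obtain ⟨w₂, hw₂Q, hw₂max⟩ := hQ.exists_isMaxOn hne Complex.continuous_abs.continuousOn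
  obtain ⟨B, hB⟩ := bounded_of_phi_bounded hφ (Complex.abs w₂)
  obtain ⟨M₂, hM₂⟩ := exists_max_shell2 hφ
  obtain ⟨N, hN⟩ := pow_unbounded_of_one_lt M₂ hm₁
  -- the escape-time bounded set
  set D := {y : ℂ | ∃ n ≤ N, R1 c ≤ Complex.abs ((fc c)^[n] y)} with hDdef
  have hDclosed : IsClosed D := by
    have hDeq : D = ⋃ n ∈ Finset.range (N+1), {y : ℂ | R1 c ≤ Complex.abs ((fc c)^[n] y)} := by
      ext y
      simp only [hDdef, Set.mem_setOf_eq, Set.mem_iUnion, Finset.mem_range, Nat.lt_succ_iff,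
        exists_prop]
    rw [hDeq]
    apply isClosed_biUnion_finset
    intro n _
    have hcont : Continuous fun y : ℂ => Complex.abs ((fc c)^[n] y) := by
      have hfc : Continuous (fc c) := by unfold fc; continuity
      exact Complex.continuous_abs.comp (hfc.iterate n)
    exact isClosed_le continuous_const hcont
  have hDA : D ⊆ (filledJulia c)ᶜ := by
    rintro y ⟨n, -, hn⟩
    exact escapes c hn
  -- the preimage is contained in D
  have hsubD : (filledJulia c)ᶜ ∩ φ ⁻¹' Q ⊆ D := by
    rintro x ⟨hxA, hxQ⟩
    have hxA' : x ∉ filledJulia c := hxA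
    have hex : ∃ n, R1 c < Complex.abs ((fc c)^[n] x) := by
      by_contra hcon
      push_neg at hcon
      exact hxA' ((mem_filledJulia_iff c).mpr fun n => hcon n)
    classical
    set n := Nat.find hex with hndef
    have hn := Nat.find_spec hex
    refine ⟨n, ?_, hn.le⟩
    -- show n ≤ N
    by_contra hcon
    push_neg at hcon
    have hn1 : 1 ≤ n := by omega
    have hprev : Complex.abs ((fc c)^[n-1] x) ≤ R1 c := by
      have := Nat.find_min hex (m := n - 1) (by omega)
      push_neg at this
      exact this
    have hu : (fc c)^[n] x ∈ shell2 c := by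
      constructor
      · exact hn.le
      · have hstep : (fc c)^[n] x = fc c ((fc c)^[n-1] x) := by
          conv_lhs => rw [show n = (n-1) + 1 by omega]
          rw [Function.iterate_succ_apply']
        rw [hstep]
        unfold fc
        calc Complex.abs ((fc c)^[n-1] x ^ 2 + c)
            ≤ Complex.abs ((fc c)^[n-1] x ^ 2) + Complex.abs c := Complex.abs.add_le _ _
          _ ≤ (R1 c)^2 + Complex.abs c := by
              rw [map_pow]
              have := Complex.abs.nonneg ((fc c)^[n-1] x)
              nlinarith
    have hφu : Complex.abs (φ ((fc c)^[n] x)) ≤ M₂ := hM₂ _ hu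
    have hiter : φ ((fc c)^[n] x) = φ x ^ 2 ^ n := phi_iterate hφ hxA' n
    have hφx : m₁ ≤ Complex.abs (φ x) := hw₁min hxQ
    have hpow : m₁ ^ 2 ^ n ≤ Complex.abs (φ x ^ 2 ^ n) := by
      rw [map_pow]
      exact pow_le_pow_left₀ (by linarith : (0:ℝ) ≤ m₁) hφx _
    have hNn : m₁ ^ N ≤ m₁ ^ 2 ^ n := by
      apply pow_le_pow_right₀ hm₁.le
      calc N ≤ n := hcon.le
        _ ≤ 2 ^ n := Nat.le_of_lt (Nat.lt_two_pow_self (n := n))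
    rw [hiter] at hφu
    linarith
  -- the preimage is bounded
  have hsubB : (filledJulia c)ᶜ ∩ φ ⁻¹' Q ⊆ Metric.closedBall 0 B := by
    rintro x ⟨hxA, hxQ⟩
    simp only [Metric.mem_closedBall, Complex.dist_eq, sub_zero]
    exact hB x hxA (hw₂max hxQ)
  -- closedness
  have hclosed : IsClosed ((filledJulia c)ᶜ ∩ φ ⁻¹' Q) := by
    rw [← closure_subset_iff_isClosed]
    intro x hx
    have hxD : x ∈ D := closure_minimal hsubD hDclosed hx
    have hxA : x ∈ (filledJulia c)ᶜ := hDA hxD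
    have hcwa : ContinuousWithinAt φ ((filledJulia c)ᶜ ∩ φ ⁻¹' Q) x :=
      ((hφ.continuousOn x hxA).mono Set.inter_subset_left)
    have hmem : φ x ∈ closure (φ '' ((filledJulia c)ᶜ ∩ φ ⁻¹' Q)) := hcwa.mem_closure_image hx
    have himg : φ '' ((filledJulia c)ᶜ ∩ φ ⁻¹' Q) ⊆ Q := by
      rintro - ⟨y, ⟨-, hyQ⟩, rfl⟩
      exact hyQ
    have hφxQ : φ x ∈ Q := by
      have h1 := (closure_mono himg) hmem
      rwa [hQ.isClosed.closure_eq] at h1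
    exact ⟨hxA, hφxQ⟩
  exact Metric.isCompact_of_isClosed_isBounded hclosed
    ((Metric.isBounded_closedBall).subset hsubB)

end WakeProof

namespace WakeProof

noncomputable def psi (c : ℂ) (φ : ℂ → ℂ) : ℂ → ℂ := Function.invFunOn φ (filledJulia c)ᶜ

lemma psi_spec {c : ℂ} {φ : ℂ → ℂ} (hφ : IsBottcher c φ) {w : ℂ}
    (hw : 1 < Complex.abs w) :
    psi c φ w ∈ (filledJulia c)ᶜ ∧ φ (psi c φ w) = w := by
  have hex : ∃ a ∈ (filledJulia c)ᶜ, φ a = w := hφ.bijOn.surjOn hw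
  exact Function.invFunOn_pos hex

lemma psi_mem {c : ℂ} {φ : ℂ → ℂ} (hφ : IsBottcher c φ) {w : ℂ}
    (hw : 1 < Complex.abs w) : psi c φ w ∉ filledJulia c := (psi_spec hφ hw).1

lemma phi_psi {c : ℂ} {φ : ℂ → ℂ} (hφ : IsBottcher c φ) {w : ℂ}
    (hw : 1 < Complex.abs w) : φ (psi c φ w) = w := (psi_spec hφ hw).2

lemma psi_phi {c : ℂ} {φ : ℂ → ℂ} (hφ : IsBottcher c φ) {x : ℂ}
    (hx : x ∉ filledJulia c) : psi c φ (φ x) = x := by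
  have hw : 1 < Complex.abs (φ x) := hφ.bijOn.mapsTo hx
  exact hφ.bijOn.injOn (psi_mem hφ hw) hx (phi_psi hφ hw)

lemma psi_eq_of {c : ℂ} {φ : ℂ → ℂ} (hφ : IsBottcher c φ) {w x : ℂ}
    (hx : x ∉ filledJulia c) (h : φ x = w) : psi c φ w = x := by
  subst h
  exact psi_phi hφ hx

lemma psi_neg {c : ℂ} {φ : ℂ → ℂ} (hφ : IsBottcher c φ) {w : ℂ}
    (hw : 1 < Complex.abs w) : psi c φ (-w) = - psi c φ w := by
  apply psi_eq_of hφ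
  · intro hmem
    rw [filledJulia_neg] at hmem
    exact psi_mem hφ hw hmem
  · rw [phi_neg hφ (psi_mem hφ hw), phi_psi hφ hw]

/-- continuity of the inverse of the Böttcher map. -/
lemma psi_continuousOn {c : ℂ} {φ : ℂ → ℂ} (hφ : IsBottcher c φ) :
    ContinuousOn (psi c φ) {w : ℂ | 1 < Complex.abs w} := by
  intro w₀ hw₀
  have hw₀' : 1 < Complex.abs w₀ := hw₀
  set ε : ℝ := (Complex.abs w₀ - 1) / 2 with hεdef
  have hε : 0 < ε := by rw [hεdef]; linarith
  set Q := Metric.closedBall w₀ ε with hQdef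
  have hQV : Q ⊆ {w : ℂ | 1 < Complex.abs w} := by
    intro w hw
    rw [hQdef] at hw
    simp only [Metric.mem_closedBall, Complex.dist_eq] at hw
    have h1 : Complex.abs w₀ - Complex.abs w ≤ Complex.abs (w - w₀) := by
      have h := Complex.abs.add_le (w₀ - w) w
      rw [sub_add_cancel] at h
      rw [show w - w₀ = -(w₀ - w) by ring, AbsoluteValue.map_neg]
      linarith
    simp only [Set.mem_setOf_eq]
    have h3 : Complex.abs (w - w₀) ≤ (Complex.abs w₀ - 1) / 2 := by rw [← hεdef]; exact hw
    linarith
  set P := (filledJulia c)ᶜ ∩ φ ⁻¹' Q with hPdef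
  have hPc : IsCompact P := phi_proper hφ (isCompact_closedBall w₀ ε) hQV
  have hbij : Set.BijOn φ P Q := by
    refine ⟨fun x hx => hx.2, hφ.bijOn.injOn.mono Set.inter_subset_left, ?_⟩
    intro w hw
    obtain ⟨x, hx, rfl⟩ := hφ.bijOn.surjOn (hQV hw)
    exact ⟨x, ⟨hx, hw⟩, rfl⟩
  -- move to subtypes
  haveI : CompactSpace P := isCompact_iff_compactSpace.mp hPc
  set E : P ≃ Q := Set.BijOn.equiv φ hbij with hEdef
  have hEcont : Continuous (E : P → Q) := by
    apply Continuous.subtype_mk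
    exact ContinuousOn.restrict (hφ.continuousOn.mono Set.inter_subset_left)
  set H : P ≃ₜ Q := Continuous.homeoOfEquivCompactToT2 hEcont with hHdef
  have hpsiQ : ContinuousOn (psi c φ) Q := by
    rw [continuousOn_iff_continuous_restrict]
    have hres : Set.restrict Q (psi c φ) = fun w : Q => ((H.symm w : P) : ℂ) := by
      funext w
      have hwQ : (w : ℂ) ∈ Q := w.2
      have hmem : ((H.symm w : P) : ℂ) ∈ P := (H.symm w).2
      have hval : φ ((H.symm w : P) : ℂ) = (w : ℂ) := by
        have : E (H.symm w) = w := H.apply_symm_apply w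
        have h2 : ((E (H.symm w) : Q) : ℂ) = (w : ℂ) := by rw [this]
        rwa [show ((E (H.symm w) : Q) : ℂ) = φ ((H.symm w : P) : ℂ) from rfl] at h2
      exact psi_eq_of hφ hmem.1 hval
    change Continuous (Set.restrict Q (psi c φ))
    rw [hres]
    exact continuous_subtype_val.comp H.symm.continuous
  have hQnhds : Q ∈ nhdsWithin w₀ {w : ℂ | 1 < Complex.abs w} :=
    mem_nhdsWithin_of_mem_nhds (Metric.closedBall_mem_nhds w₀ hε)
  exact (hpsiQ w₀ (Metric.mem_closedBall_self hε.le)).mono_of_mem_nhdsWithin hQnhds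

end WakeProof

namespace WakeProof

def L (s : ℝ) : Set ℂ := {w : ℂ | ∃ r : ℝ, 1 < r ∧ w = (r : ℂ) * e s}

lemma L_subset_V (s : ℝ) : L s ⊆ {w : ℂ | 1 < Complex.abs w} := by
  rintro w ⟨r, hr, rfl⟩
  simp only [Set.mem_setOf_eq, map_mul, abs_e, mul_one, Complex.abs_ofReal]
  rw [abs_of_pos (by linarith)]
  exact hr

lemma extRay_eq_psi_image {c : ℂ} {φ : ℂ → ℂ} (hφ : IsBottcher c φ) (s : ℝ) :
    extRay c φ s = psi c φ '' L s := by
  ext x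
  constructor
  · rintro ⟨hx, r, hr, hphi⟩
    refine ⟨(r : ℂ) * e s, ⟨r, hr, rfl⟩, ?_⟩
    exact psi_eq_of hφ hx hphi
  · rintro ⟨w, ⟨r, hr, rfl⟩, rfl⟩
    have hV : 1 < Complex.abs ((r:ℂ) * e s) := L_subset_V s ⟨r, hr, rfl⟩
    exact ⟨psi_mem hφ hV, r, hr, phi_psi hφ hV⟩

lemma L_connected (s : ℝ) : IsConnected (L s) := by
  have h : L s = (fun r : ℝ => (r : ℂ) * e s) '' Set.Ioi 1 := by
    ext w
    constructor
    · rintro ⟨r, hr, rfl⟩; exact ⟨r, hr, rfl⟩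
    · rintro ⟨r, hr, rfl⟩; exact ⟨r, hr, rfl⟩
  rw [h]
  exact (isConnected_Ioi).image _ (Continuous.continuousOn (by continuity))

lemma extRay_connected {c : ℂ} {φ : ℂ → ℂ} (hφ : IsBottcher c φ) (s : ℝ) :
    IsConnected (extRay c φ s) := by
  rw [extRay_eq_psi_image hφ]
  exact (L_connected s).image _ ((psi_continuousOn hφ).mono (L_subset_V s))

lemma extRay_nonempty {c : ℂ} {φ : ℂ → ℂ} (hφ : IsBottcher c φ) (s : ℝ) :
    (extRay c φ s).Nonempty := (extRay_connected hφ s).nonempty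

lemma neg_extRay {c : ℂ} {φ : ℂ → ℂ} (hφ : IsBottcher c φ) (s : ℝ) :
    (fun x : ℂ => -x) '' extRay c φ s = extRay c φ (s + 1/2) := by
  have key : ∀ u : ℝ, ∀ x ∈ extRay c φ u, -x ∈ extRay c φ (u + 1/2) := by
    rintro u x ⟨hx, r, hr, hphi⟩
    refine ⟨?_, r, hr, ?_⟩
    · intro hmem
      rw [filledJulia_neg] at hmem
      exact hx hmem
    · rw [phi_neg hφ hx, hphi]
      have hee : ((r:ℂ) * Complex.exp (2*Real.pi*Complex.I*((u+1/2 : ℝ):ℂ)) : ℂ)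
          = -((r:ℂ) * Complex.exp (2*Real.pi*Complex.I*((u:ℝ):ℂ))) := by
        change (r:ℂ) * e (u+1/2) = -((r:ℂ) * e u)
        rw [e_half_add]
        ring
      exact hee.symm
  apply Set.Subset.antisymm
  · rintro - ⟨x, hx, rfl⟩
    exact key s x hx
  · intro y hy
    have h2 : -y ∈ extRay c φ (s + 1/2 + 1/2) := key _ y hy
    have h3 : extRay c φ (s + 1/2 + 1/2) = extRay c φ s := by
      apply extRay_congr
      have : s + 1/2 + 1/2 = s + (1 : ℤ) := by push_cast; ring
      rw [this]
      exact e_eq_of_int_diff 1 (by push_cast; ring)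
    rw [h3] at h2
    exact ⟨-y, h2, by ring⟩

lemma isClosed_ray_closure {c : ℂ} {φ : ℂ → ℂ} {s : ℝ} {z : ℂ}
    (h : landsAt c φ s z) : IsClosed (extRay c φ s ∪ {z}) := by
  rw [← h]; exact isClosed_closure

lemma isConnected_ray_closure {c : ℂ} {φ : ℂ → ℂ} (hφ : IsBottcher c φ) {s : ℝ} {z : ℂ}
    (h : landsAt c φ s z) : IsConnected (extRay c φ s ∪ {z}) := by
  rw [← h]; exact (extRay_connected hφ s).closure

lemma landsAt_neg {c : ℂ} {φ : ℂ → ℂ} (hφ : IsBottcher c φ) {s : ℝ} {z : ℂ}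
    (h : landsAt c φ s z) : landsAt c φ (s + 1/2) (-z) := by
  unfold landsAt at h ⊢
  rw [← neg_extRay hφ s]
  have hneg : (fun x : ℂ => -x) = ⇑(Homeomorph.neg ℂ) := rfl
  rw [hneg, ← Homeomorph.image_closure, h]
  rw [Set.image_union, Set.image_singleton]
  rfl

lemma e_ne_neg_of_lands {c : ℂ} {φ : ℂ → ℂ} (hφ : IsBottcher c φ) {a b : ℝ} {z : ℂ}
    (hza : landsAt c φ a z) (hzb : landsAt c φ b z) (hz0 : z ≠ 0)
    (hzK : z ∈ filledJulia c) : e b ≠ - e a := by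
  intro he
  have hcongr : extRay c φ b = extRay c φ (a + 1/2) := by
    apply extRay_congr
    rw [e_half_add, he]
  have h1 : extRay c φ b ∪ {z} = extRay c φ b ∪ {-z} := by
    conv_lhs => rw [← hzb]
    rw [hcongr]
    have := landsAt_neg hφ hza
    unfold landsAt at this
    rw [this]
  have hzmem : z ∈ extRay c φ b ∪ {-z} := by
    rw [← h1]; right; rfl
  rcases hzmem with hmem | hmem
  · exact hmem.1 hzK
  · simp only [Set.mem_singleton_iff] at hmem
    apply hz0
    have h2 : (2:ℂ) * z = 0 := by linear_combination hmem
    simpa using h2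

end WakeProof

namespace WakeProof

lemma e_ne_of_near {s u : ℝ} (hne : s ≠ u) (hlt : |s - u| < 1) : e s ≠ e u := by
  intro h
  obtain ⟨n, hn⟩ := e_eq_iff.mp h
  have hn' : (n : ℝ) = s - u := by linarith [hn]
  have habs : |(n : ℝ)| < 1 := by rw [hn']; exact hlt
  have h0 : n = 0 := by
    have h2 := abs_lt.mp habs
    have h3 : -1 < n ∧ n < 1 := by exact_mod_cast h2
    omega
  rw [h0] at hn'
  simp at hn'
  exact hne (by linarith)

def sector (a b : ℝ) : Set ℂ :=
  {w : ℂ | ∃ r : ℝ, 1 < r ∧ ∃ s : ℝ, a < s ∧ s < b ∧ w = (r : ℂ) * e s}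

lemma sector_subset_V (a b : ℝ) : sector a b ⊆ {w : ℂ | 1 < Complex.abs w} := by
  rintro w ⟨r, hr, s, -, -, rfl⟩
  simp only [Set.mem_setOf_eq, map_mul, abs_e, mul_one, Complex.abs_ofReal]
  rw [abs_of_pos (by linarith)]
  exact hr

lemma sector_connected {a b : ℝ} (hab : a < b) : IsConnected (sector a b) := by
  have h : sector a b = (fun p : ℝ × ℝ => (p.1 : ℂ) * e p.2) '' (Set.Ioi 1 ×ˢ Set.Ioo a b) := by
    ext w
    constructor
    · rintro ⟨r, hr, s, hs1, hs2, rfl⟩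
      exact ⟨(r, s), ⟨hr, hs1, hs2⟩, rfl⟩
    · rintro ⟨⟨r, s⟩, ⟨hr, hs1, hs2⟩, rfl⟩
      exact ⟨r, hr, s, hs1, hs2, rfl⟩
  rw [h]
  apply IsConnected.image
  · exact (isConnected_Ioi).prod (isConnected_Ioo hab)
  · apply Continuous.continuousOn
    unfold e
    continuity

lemma L_subset_sector {a b s : ℝ} (h1 : a < s) (h2 : s < b) : L s ⊆ sector a b := by
  rintro w ⟨r, hr, rfl⟩
  exact ⟨r, hr, s, h1, h2, rfl⟩

/-- angle decomposition of the exterior disk. -/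
lemma V_decomp {a b : ℝ} (hab : a < b) (hb1 : b < a + 1) {w : ℂ} (hw : 1 < Complex.abs w) :
    w ∈ L a ∪ L b ∪ sector a b ∪ sector b (a + 1) := by
  have hw0 : w ≠ 0 := by
    intro h; rw [h] at hw; simp at hw; linarith
  have hpolar : (Complex.abs w : ℂ) * Complex.exp (Complex.arg w * Complex.I) = w :=
    Complex.abs_mul_exp_arg_mul_I w
  set s₀ : ℝ := Complex.arg w / (2 * Real.pi) with hs₀def
  have hpi : (0:ℝ) < 2 * Real.pi := by positivity
  have hes₀ : e s₀ = Complex.exp (Complex.arg w * Complex.I) := by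
    unfold e
    congr 1
    rw [hs₀def]
    push_cast
    have : (2 * Real.pi : ℂ) ≠ 0 := by
      simpa using Real.pi_ne_zero
    field_simp
  set s : ℝ := a + Int.fract (s₀ - a) with hsdef
  have hs_e : e s = e s₀ := by
    apply e_eq_of_int_diff (-(⌊s₀ - a⌋))
    rw [hsdef, Int.fract]
    push_cast
    ring
  have hs_lb : a ≤ s := by
    rw [hsdef]
    linarith [Int.fract_nonneg (s₀ - a)]
  have hs_ub : s < a + 1 := by
    rw [hsdef]
    linarith [Int.fract_lt_one (s₀ - a)]
  have hw_eq : w = (Complex.abs w : ℂ) * e s := by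
    rw [hs_e, hes₀, hpolar]
  rcases eq_or_lt_of_le hs_lb with heq | hlt
  · left; left; left
    refine ⟨Complex.abs w, hw, ?_⟩
    rw [heq]
    exact hw_eq
  rcases lt_trichotomy s b with hsb | hsb | hsb
  · left; right
    exact ⟨Complex.abs w, hw, s, hlt, hsb, hw_eq⟩
  · left; left; right
    refine ⟨Complex.abs w, hw, ?_⟩
    rw [← hsb]
    exact hw_eq
  · right
    exact ⟨Complex.abs w, hw, s, hsb, hs_ub, hw_eq⟩

/-- membership of a component of an open set via closure. -/
lemma mem_comp_of_closure {F : Set ℂ} (hF : IsOpen F) {x y : ℂ}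
    (hy : y ∈ closure (connectedComponentIn F x)) (hyF : y ∈ F) :
    y ∈ connectedComponentIn F x := by
  have hopen : IsOpen (connectedComponentIn F y) := hF.connectedComponentIn
  have hne : (connectedComponentIn F y ∩ connectedComponentIn F x).Nonempty :=
    mem_closure_iff.mp hy _ hopen (mem_connectedComponentIn hyF)
  obtain ⟨p, hp1, hp2⟩ := hne
  have h1 := connectedComponentIn_eq hp1
  have h2 := connectedComponentIn_eq hp2
  rw [h2.trans h1.symm]
  exact mem_connectedComponentIn hyF

/-- an open set whose closure adds at most one point is the complement of that point. -/
lemma eq_compl_singleton {z : ℂ} {P : Set ℂ} (hPo : IsOpen P) (hPne : P.Nonempty)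
    (hcl : closure P ⊆ P ∪ {z}) (hzP : z ∉ P) : P = {z}ᶜ := by
  have hX : IsConnected ({z}ᶜ : Set ℂ) := by
    apply isConnected_compl_singleton_of_one_lt_rank
    rw [Complex.rank_real_complex]
    norm_num
  have hXP : P ⊆ ({z}ᶜ : Set ℂ) := fun p hp => fun h => hzP (h ▸ hp)
  have hpre := hX.isPreconnected
  rw [isPreconnected_iff_subset_of_disjoint] at hpre
  have hsub : ({z}ᶜ : Set ℂ) ⊆ P ∪ (closure P)ᶜ := by
    intro x hx
    by_cases hxc : x ∈ closure P
    · left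
      rcases hcl hxc with h | h
      · exact h
      · exact absurd h hx
    · right; exact hxc
  have hdisj : ({z}ᶜ : Set ℂ) ∩ (P ∩ (closure P)ᶜ) = ∅ := by
    ext x
    simp only [Set.mem_inter_iff, Set.mem_empty_iff_false, iff_false, not_and]
    intro _ hp hcp
    exact hcp (subset_closure hp)
  rcases hpre P (closure P)ᶜ hPo (isClosed_closure).isOpen_compl hsub hdisj with h | h
  · exact Set.Subset.antisymm hXP h
  · exfalso
    obtain ⟨p, hp⟩ := hPne
    exact (h (hXP hp)) (subset_closure hp)

end WakeProof

namespace WakeProof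

lemma L_angle {u r : ℝ} {s : ℝ} (hr : 0 < r) (h : (r:ℂ) * e s ∈ L u) : e s = e u := by
  obtain ⟨r', hr', heq⟩ := h
  exact (polar_unique hr (by linarith) heq).2

set_option maxHeartbeats 2000000 in
lemma master {c α : ℂ} {φ : ℂ → ℂ} (hφ : IsBottcher c φ) (hα : fc c α = α) {z : ℂ}
    (hzK : z ∈ filledJulia c) (hzα : z ≠ α) (hz0 : z ≠ 0)
    {a b : ℝ} (ha0 : 0 ≤ a) (hab : a < b) (hb1 : b < 1)
    (hza : landsAt c φ a z) (hzb : landsAt c φ b z)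
    {W : Set ℂ} (hW : IsWake c φ a b z W) (hWα : α ∉ W) :
    wakeAngle c φ W ≠ 1 / 2 ∧ (1 / 2 < wakeAngle c φ W ↔ (0 : ℂ) ∈ W) := by
  obtain ⟨w₀, hw₀, hWeq⟩ := hW
  set S := extRay c φ a ∪ extRay c φ b ∪ {z} with hSdef
  have hSclosed : IsClosed S := by
    have hh : S = (extRay c φ a ∪ {z}) ∪ (extRay c φ b ∪ {z}) := by
      rw [hSdef]; ext x
      simp only [Set.mem_union, Set.mem_singleton_iff]
      tauto
    rw [hh]
    exact (isClosed_ray_closure hza).union (isClosed_ray_closure hzb)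
  have hSo : IsOpen Sᶜ := hSclosed.isOpen_compl
  have hzS : z ∈ S := by right; rfl
  have heab : e a ≠ e b := by
    apply e_ne_of_near hab.ne
    rw [abs_sub_comm, abs_of_pos (by linarith)]
    linarith
  have hnehalf : e b ≠ - e a := e_ne_neg_of_lands hφ hza hzb hz0 hzK
  have hd_ne : b - a ≠ 1/2 := by
    intro h
    apply hnehalf
    have hba : b = a + 1/2 := by linarith
    rw [hba, e_half_add]
  -- sectors
  have hsec1V := sector_subset_V a b
  have hsec2V := sector_subset_V b (a+1)
  set A₁ := psi c φ '' sector a b with hA₁def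
  set A₂ := psi c φ '' sector b (a+1) with hA₂def
  have hA₁conn : IsConnected A₁ :=
    (sector_connected hab).image _ ((psi_continuousOn hφ).mono hsec1V)
  have hA₂conn : IsConnected A₂ :=
    (sector_connected (by linarith)).image _ ((psi_continuousOn hφ).mono hsec2V)
  have hray_psi : ∀ (s : ℝ) (w : ℂ), 1 < Complex.abs w → psi c φ w ∈ extRay c φ s → w ∈ L s := by
    intro s w hwV hmem
    rw [extRay_eq_psi_image hφ] at hmem
    obtain ⟨w', hw', heq⟩ := hmem
    have hw'V := L_subset_V s hw'
    have : w' = w := by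
      rw [← phi_psi hφ hw'V, ← phi_psi hφ hwV, heq]
    rwa [← this]
  -- the sector images avoid S
  have hA₁Sc : A₁ ⊆ Sᶜ := by
    rintro x ⟨w, hw, rfl⟩
    obtain ⟨r, hr, s, hs1, hs2, rfl⟩ := hw
    intro hS
    have hwV : 1 < Complex.abs ((r:ℂ) * e s) := hsec1V ⟨r, hr, s, hs1, hs2, rfl⟩
    rcases hS with (hS | hS) | hS
    · exact e_ne_of_near hs1.ne' (by rw [abs_of_pos (by linarith)]; linarith)
        (L_angle (by linarith) (hray_psi a _ hwV hS))
    · exact e_ne_of_near hs2.ne (by rw [abs_of_neg (by linarith), neg_sub]; linarith)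
        (L_angle (by linarith) (hray_psi b _ hwV hS))
    · simp only [Set.mem_singleton_iff] at hS
      exact psi_mem hφ hwV (hS ▸ hzK)
  have hA₂Sc : A₂ ⊆ Sᶜ := by
    rintro x ⟨w, hw, rfl⟩
    obtain ⟨r, hr, s, hs1, hs2, rfl⟩ := hw
    intro hS
    have hwV : 1 < Complex.abs ((r:ℂ) * e s) := hsec2V ⟨r, hr, s, hs1, hs2, rfl⟩
    rcases hS with (hS | hS) | hS
    · exact e_ne_of_near (by intro h; subst h; linarith)
        (by rw [abs_of_pos (by linarith)]; linarith)
        (L_angle (by linarith) (hray_psi a _ hwV hS))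
    · exact e_ne_of_near hs1.ne' (by rw [abs_of_pos (by linarith)]; linarith)
        (L_angle (by linarith) (hray_psi b _ hwV hS))
    · simp only [Set.mem_singleton_iff] at hS
      exact psi_mem hφ hwV (hS ▸ hzK)
  -- base points
  have hw₁sec : ((2:ℝ):ℂ) * e ((a+b)/2) ∈ sector a b :=
    ⟨2, one_lt_two, (a+b)/2, by linarith, by linarith, rfl⟩
  have hw₂sec : ((2:ℝ):ℂ) * e ((a+b+1)/2) ∈ sector b (a+1) :=
    ⟨2, one_lt_two, (a+b+1)/2, by linarith, by linarith, rfl⟩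
  set x₁ := psi c φ (((2:ℝ):ℂ) * e ((a+b)/2)) with hx₁def
  set x₂ := psi c φ (((2:ℝ):ℂ) * e ((a+b+1)/2)) with hx₂def
  have hx₁A₁ : x₁ ∈ A₁ := ⟨_, hw₁sec, rfl⟩
  have hx₂A₂ : x₂ ∈ A₂ := ⟨_, hw₂sec, rfl⟩
  have hA1CC1 : A₁ ⊆ (connectedComponentIn Sᶜ x₁) :=
    hA₁conn.isPreconnected.subset_connectedComponentIn hx₁A₁ hA₁Sc
  have hA2CC2 : A₂ ⊆ (connectedComponentIn Sᶜ x₂) :=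
    hA₂conn.isPreconnected.subset_connectedComponentIn hx₂A₂ hA₂Sc
  have hrayCC1 : ∀ s : ℝ, a < s → s < b → extRay c φ s ⊆ (connectedComponentIn Sᶜ x₁) := by
    intro s h1 h2
    rw [extRay_eq_psi_image hφ]
    exact (Set.image_mono (L_subset_sector h1 h2)).trans hA1CC1
  have hrayCC2 : ∀ s : ℝ, b < s → s < a + 1 → extRay c φ s ⊆ (connectedComponentIn Sᶜ x₂) := by
    intro s h1 h2
    rw [extRay_eq_psi_image hφ]
    exact (Set.image_mono (L_subset_sector h1 h2)).trans hA2CC2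
  -- classification of components
  have hclaimA : ∀ x, x ∈ Sᶜ → x ∉ filledJulia c →
      connectedComponentIn Sᶜ x = (connectedComponentIn Sᶜ x₁) ∨ connectedComponentIn Sᶜ x = (connectedComponentIn Sᶜ x₂) := by
    intro x hx hxK
    have hxV : 1 < Complex.abs (φ x) := hφ.bijOn.mapsTo hxK
    have hxpsi : psi c φ (φ x) = x := psi_phi hφ hxK
    rcases V_decomp hab (by linarith) hxV with ((hL | hL) | hsec) | hsec
    · exact absurd (by left; left; rw [extRay_eq_psi_image hφ]; exact ⟨φ x, hL, hxpsi⟩ : x ∈ S) hx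
    · exact absurd (by left; right; rw [extRay_eq_psi_image hφ]; exact ⟨φ x, hL, hxpsi⟩ : x ∈ S) hx
    · exact Or.inl (connectedComponentIn_eq (hA1CC1 ⟨φ x, hsec, hxpsi⟩)).symm
    · exact Or.inr (connectedComponentIn_eq (hA2CC2 ⟨φ x, hsec, hxpsi⟩)).symm
  have htwo : ∀ x, x ∈ Sᶜ →
      connectedComponentIn Sᶜ x = (connectedComponentIn Sᶜ x₁) ∨ connectedComponentIn Sᶜ x = (connectedComponentIn Sᶜ x₂) := by
    intro x hx
    by_cases hxK : x ∈ filledJulia c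
    · by_cases hPA : ∃ p ∈ connectedComponentIn Sᶜ x, p ∉ filledJulia c
      · obtain ⟨p, hpP, hpA⟩ := hPA
        have h1 : connectedComponentIn Sᶜ p = connectedComponentIn Sᶜ x :=
          (connectedComponentIn_eq hpP).symm
        rw [← h1]
        exact hclaimA p (connectedComponentIn_subset _ _ hpP) hpA
      · exfalso
        push_neg at hPA
        have hPopen : IsOpen (connectedComponentIn Sᶜ x) := hSo.connectedComponentIn
        have hPne : (connectedComponentIn Sᶜ x).Nonempty := ⟨x, mem_connectedComponentIn hx⟩
        have hzP : z ∉ connectedComponentIn Sᶜ x :=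
          fun h => (connectedComponentIn_subset _ _ h) hzS
        have hcl : closure (connectedComponentIn Sᶜ x) ⊆ connectedComponentIn Sᶜ x ∪ {z} := by
          intro y hy
          by_cases hyS : y ∈ Sᶜ
          · exact Or.inl (mem_comp_of_closure hSo hy hyS)
          · right
            have hyK : y ∈ filledJulia c :=
              closure_minimal (fun p hp => hPA p hp) (isClosed_filledJulia c) hy
            have hyS' : y ∈ S := Set.not_notMem.mp hyS
            rcases hyS' with (hr | hr) | hr
            · exact absurd hyK hr.1
            · exact absurd hyK hr.1
            · exact hr
        have hPeq := eq_compl_singleton hPopen hPne hcl hzP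
        have hx₁A : x₁ ∉ filledJulia c := psi_mem hφ (hsec1V hw₁sec)
        have hx₁P : x₁ ∈ connectedComponentIn Sᶜ x := by
          rw [hPeq]
          intro h
          simp only [Set.mem_singleton_iff] at h
          exact hx₁A (h ▸ hzK)
        exact hx₁A (hPA x₁ hx₁P)
    · exact hclaimA x hx hxK
  -- α and distinctness of the two components
  have hαSc : α ∈ Sᶜ := by
    intro hmem
    rcases hmem with (hr | hr) | hr
    · exact hr.1 (alpha_mem_filledJulia c hα)
    · exact hr.1 (alpha_mem_filledJulia c hα)
    · exact hzα hr.symm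
  have hWcomp : W = (connectedComponentIn Sᶜ x₁) ∨ W = (connectedComponentIn Sᶜ x₂) := by rw [hWeq]; exact htwo w₀ hw₀
  have hne12 : (connectedComponentIn Sᶜ x₁) ≠ (connectedComponentIn Sᶜ x₂) := by
    intro h
    apply hWα
    have hαmem : α ∈ connectedComponentIn Sᶜ α := mem_connectedComponentIn hαSc
    rcases htwo α hαSc with hα1 | hα1
    · rcases hWcomp with hw | hw
      · rw [hw, ← hα1]; exact hαmem
      · rw [hw, ← h, ← hα1]; exact hαmem
    · rcases hWcomp with hw | hw
      · rw [hw, h, ← hα1]; exact hαmem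
      · rw [hw, ← hα1]; exact hαmem
  have hdisj : ∀ y, y ∈ (connectedComponentIn Sᶜ x₁) → y ∈ (connectedComponentIn Sᶜ x₂) → False := by
    intro y h1 h2
    exact hne12 ((connectedComponentIn_eq h1).trans (connectedComponentIn_eq h2).symm)
  -- the reflected ray pair S'
  set S' := extRay c φ (a + 1/2) ∪ extRay c φ (b + 1/2) ∪ {-z} with hS'def
  have hland_a : landsAt c φ (a + 1/2) (-z) := landsAt_neg hφ hza
  have hland_b : landsAt c φ (b + 1/2) (-z) := landsAt_neg hφ hzb
  have hS'conn : IsConnected S' := by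
    have h1 : IsConnected (extRay c φ (a + 1/2) ∪ {-z}) := isConnected_ray_closure hφ hland_a
    have h2 : IsConnected (extRay c φ (b + 1/2) ∪ {-z}) := isConnected_ray_closure hφ hland_b
    have hh : S' = (extRay c φ (a + 1/2) ∪ {-z}) ∪ (extRay c φ (b + 1/2) ∪ {-z}) := by
      rw [hS'def]; ext x
      simp only [Set.mem_union, Set.mem_singleton_iff]
      tauto
    rw [hh]
    apply IsConnected.union ?_ h1 h2
    exact ⟨-z, Or.inr rfl, Or.inr rfl⟩
  have hnzK : -z ∈ filledJulia c := filledJulia_neg c |>.mpr hzK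
  have he1 : e (a + 1/2) ≠ e a := by
    rw [e_half_add]
    intro h
    exact e_ne_zero a (CharZero.neg_eq_self_iff.mp h)
  have he2 : e (a + 1/2) ≠ e b := by
    rw [e_half_add]
    intro h
    exact hnehalf h.symm
  have he3 : e (b + 1/2) ≠ e a := by
    rw [e_half_add]
    intro h
    apply hnehalf
    linear_combination -h
  have he4 : e (b + 1/2) ≠ e b := by
    rw [e_half_add]
    intro h
    exact e_ne_zero b (CharZero.neg_eq_self_iff.mp h)
  have hS'Sc : S' ⊆ Sᶜ := by
    intro y hy hyS
    rcases hy with (hy | hy) | hy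
    · rcases hyS with (hs | hs) | hs
      · exact (Set.eq_empty_iff_forall_notMem.mp (extRay_disjoint he1) y) ⟨hy, hs⟩
      · exact (Set.eq_empty_iff_forall_notMem.mp (extRay_disjoint he2) y) ⟨hy, hs⟩
      · exact hy.1 (hs ▸ hzK)
    · rcases hyS with (hs | hs) | hs
      · exact (Set.eq_empty_iff_forall_notMem.mp (extRay_disjoint he3) y) ⟨hy, hs⟩
      · exact (Set.eq_empty_iff_forall_notMem.mp (extRay_disjoint he4) y) ⟨hy, hs⟩
      · exact hy.1 (hs ▸ hzK)
    · simp only [Set.mem_singleton_iff] at hy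
      subst hy
      rcases hyS with (hs | hs) | hs
      · exact hs.1 hnzK
      · exact hs.1 hnzK
      · simp only [Set.mem_singleton_iff] at hs
        apply hz0
        have h2 : (2:ℂ) * z = 0 := by linear_combination - hs
        simpa using h2
  have hnegS : (fun x : ℂ => -x) '' S = S' := by
    rw [hSdef, hS'def, Set.image_union, Set.image_union, neg_extRay hφ, neg_extRay hφ,
      Set.image_singleton]
  have h0Sc : (0:ℂ) ∈ Sᶜ := by
    intro hmem
    rcases hmem with (hr | hr) | hr
    · exact hr.1 (zero_mem_filledJulia hφ)
    · exact hr.1 (zero_mem_filledJulia hφ)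
    · exact hz0 hr.symm
  have hx₁Sc : x₁ ∈ Sᶜ := hA₁Sc hx₁A₁
  have hx₂Sc : x₂ ∈ Sᶜ := hA₂Sc hx₂A₂
  -- the reflection argument
  have hDarg : ∀ Cs Cb : Set ℂ,
      (∃ xs, xs ∈ Sᶜ ∧ Cs = connectedComponentIn Sᶜ xs) →
      (∃ xb, xb ∈ Sᶜ ∧ Cb = connectedComponentIn Sᶜ xb) →
      (∀ y, y ∈ Cs → y ∈ Cb → False) → S' ⊆ Cb →
      (∃ s : ℝ, extRay c φ s ⊆ Cs ∧ extRay c φ (s + 1/2) ⊆ Cb) → (0:ℂ) ∈ Cs → False := by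
    rintro Cs Cb ⟨xs, hxsSc, rfl⟩ ⟨xb, hxbSc, rfl⟩ hdj hS'b ⟨s, hsCs, hsCb⟩ h0s
    set D := (fun x : ℂ => -x) '' connectedComponentIn Sᶜ xs with hDdef
    have hDconn : IsConnected D := by
      apply IsConnected.image
      · exact ⟨⟨xs, mem_connectedComponentIn hxsSc⟩, isPreconnected_connectedComponentIn⟩
      · exact continuous_neg.continuousOn
    have h0D : (0:ℂ) ∈ D := ⟨0, h0s, neg_zero⟩
    by_cases hDS : ∀ q ∈ D, q ∈ Sᶜ
    · obtain ⟨p, hp⟩ := extRay_nonempty hφ s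
      have hpD : -p ∈ D := ⟨p, hsCs hp, rfl⟩
      have hpCb : -p ∈ connectedComponentIn Sᶜ xb := hsCb (by
        rw [← neg_extRay hφ]
        exact ⟨p, hp, rfl⟩)
      have hDsub : D ⊆ connectedComponentIn Sᶜ (-p) :=
        hDconn.isPreconnected.subset_connectedComponentIn hpD (fun q hq => hDS q hq)
      have hcomp : connectedComponentIn Sᶜ (-p) = connectedComponentIn Sᶜ xb :=
        (connectedComponentIn_eq hpCb).symm
      exact hdj 0 h0s (by rw [← hcomp]; exact hDsub h0D)
    · push_neg at hDS
      obtain ⟨q, hqD, hqS⟩ := hDS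
      obtain ⟨u, huCs, rfl⟩ := hqD
      have huS' : u ∈ S' := by
        rw [← hnegS]
        exact ⟨-u, Set.not_notMem.mp hqS, neg_neg u⟩
      exact hdj u huCs (hS'b huS')
  -- the crossing ray pair
  have hcross₁ : extRay c φ ((a+b)/2) ⊆ (connectedComponentIn Sᶜ x₁) := hrayCC1 _ (by linarith) (by linarith)
  have hcross₂ : extRay c φ ((a+b+1)/2) ⊆ (connectedComponentIn Sᶜ x₂) := hrayCC2 _ (by linarith) (by linarith)
  have hcross₂' : extRay c φ ((a+b+1)/2 + 1/2) = extRay c φ ((a+b)/2) :=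
    extRay_congr (e_eq_of_int_diff 1 (by push_cast; ring))
  have hcross₁' : extRay c φ ((a+b)/2 + 1/2) = extRay c φ ((a+b+1)/2) := by
    rw [show (a+b)/2 + 1/2 = (a+b+1)/2 by ring]
  -- the sets of angles of rays inside each component
  have hT1 : {t : ℝ | t ∈ Set.Ico (0:ℝ) 1 ∧ extRay c φ t ⊆ (connectedComponentIn Sᶜ x₁)} = Set.Ioo a b := by
    ext t
    simp only [Set.mem_setOf_eq, Set.mem_Ico, Set.mem_Ioo]
    constructor
    · rintro ⟨⟨ht0, ht1⟩, hsub⟩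
      obtain ⟨p, hp⟩ := extRay_nonempty hφ t
      constructor
      · rcases lt_trichotomy t a with h | h | h
        · exfalso
          have hshift : extRay c φ (t + 1) = extRay c φ t :=
            extRay_congr (e_eq_of_int_diff 1 (by push_cast; ring))
          have : extRay c φ t ⊆ (connectedComponentIn Sᶜ x₂) := by
            rw [← hshift]
            exact hrayCC2 _ (by linarith) (by linarith)
          exact hdisj p (hsub hp) (this hp)
        · exfalso
          have hpS : p ∈ S := by
            left; left
            rw [← h]
            exact hp
          exact (connectedComponentIn_subset _ _ (hsub hp)) hpS
        · exact h
      · rcases lt_trichotomy t b with h | h | h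
        · exact h
        · exfalso
          have hpS : p ∈ S := by
            left; right
            rw [← h]
            exact hp
          exact (connectedComponentIn_subset _ _ (hsub hp)) hpS
        · exfalso
          have : extRay c φ t ⊆ (connectedComponentIn Sᶜ x₂) := hrayCC2 _ h (by linarith)
          exact hdisj p (hsub hp) (this hp)
    · rintro ⟨h1, h2⟩
      exact ⟨⟨by linarith, by linarith⟩, hrayCC1 t h1 h2⟩
  have hT2 : {t : ℝ | t ∈ Set.Ico (0:ℝ) 1 ∧ extRay c φ t ⊆ (connectedComponentIn Sᶜ x₂)}
      = Set.Ico 0 a ∪ Set.Ioo b 1 := by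
    ext t
    simp only [Set.mem_setOf_eq, Set.mem_Ico, Set.mem_Ioo, Set.mem_union]
    constructor
    · rintro ⟨⟨ht0, ht1⟩, hsub⟩
      obtain ⟨p, hp⟩ := extRay_nonempty hφ t
      rcases lt_trichotomy t a with h | h | h
      · exact Or.inl ⟨ht0, h⟩
      · exfalso
        have hpS : p ∈ S := by
          left; left
          rw [← h]
          exact hp
        exact (connectedComponentIn_subset _ _ (hsub hp)) hpS
      rcases lt_trichotomy t b with h' | h' | h'
      · exfalso
        exact hdisj p (hrayCC1 t h h' hp) (hsub hp)
      · exfalso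
        have hpS : p ∈ S := by
          left; right
          rw [← h']
          exact hp
        exact (connectedComponentIn_subset _ _ (hsub hp)) hpS
      · exact Or.inr ⟨h', ht1⟩
    · rintro (⟨h1, h2⟩ | ⟨h1, h2⟩)
      · refine ⟨⟨h1, by linarith⟩, ?_⟩
        have hshift : extRay c φ (t + 1) = extRay c φ t :=
          extRay_congr (e_eq_of_int_diff 1 (by push_cast; ring))
        rw [← hshift]
        exact hrayCC2 _ (by linarith) (by linarith)
      · exact ⟨⟨by linarith, h2⟩, hrayCC2 t h1 (by linarith)⟩
  have hwaCC1 : wakeAngle c φ (connectedComponentIn Sᶜ x₁) = b - a := by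
    unfold wakeAngle
    rw [hT1, Real.volume_Ioo]
    exact ENNReal.toReal_ofReal (by linarith)
  have hwaCC2 : wakeAngle c φ (connectedComponentIn Sᶜ x₂) = 1 - (b - a) := by
    unfold wakeAngle
    rw [hT2, MeasureTheory.measure_union ?hd measurableSet_Ioo, Real.volume_Ico,
      Real.volume_Ioo]
    · rw [← ENNReal.ofReal_add (by linarith) (by linarith), ENNReal.toReal_ofReal (by linarith)]
      ring
    case hd =>
      rw [Set.disjoint_left]
      rintro x ⟨-, h2⟩ ⟨h3, -⟩
      linarith
  -- branch on the size
  rcases lt_or_gt_of_ne hd_ne with hdlt | hdgt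
  · -- b - a < 1/2 : the big side is (connectedComponentIn Sᶜ x₂)
    have hS2CC2 : S' ⊆ (connectedComponentIn Sᶜ x₂) := by
      obtain ⟨p, hp⟩ := extRay_nonempty hφ (a + 1/2)
      have hpCC2 : p ∈ (connectedComponentIn Sᶜ x₂) := hrayCC2 (a + 1/2) (by linarith) (by linarith) hp
      have hsub : S' ⊆ connectedComponentIn Sᶜ p :=
        hS'conn.isPreconnected.subset_connectedComponentIn (Or.inl (Or.inl hp)) hS'Sc
      rwa [← connectedComponentIn_eq hpCC2] at hsub
    have h0CC2 : (0:ℂ) ∈ (connectedComponentIn Sᶜ x₂) := by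
      rcases htwo 0 h0Sc with h | h
      · exfalso
        have h0CC1 : (0:ℂ) ∈ (connectedComponentIn Sᶜ x₁) := by rw [← h]; exact mem_connectedComponentIn h0Sc
        exact hDarg (connectedComponentIn Sᶜ x₁) (connectedComponentIn Sᶜ x₂) ⟨x₁, hx₁Sc, rfl⟩ ⟨x₂, hx₂Sc, rfl⟩ hdisj hS2CC2
          ⟨(a+b)/2, hcross₁, by rw [hcross₁']; exact hcross₂⟩ h0CC1
      · rw [← h]; exact mem_connectedComponentIn h0Sc
    have h0nCC1 : (0:ℂ) ∉ (connectedComponentIn Sᶜ x₁) := fun h => hdisj 0 h h0CC2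
    rcases hWcomp with hWe | hWe <;> rw [hWe]
    · rw [hwaCC1]
      exact ⟨hd_ne, by constructor <;> intro h <;> [exact absurd h (by linarith); exact absurd h h0nCC1]⟩
    · rw [hwaCC2]
      refine ⟨by intro h; apply hd_ne; linarith, ?_⟩
      constructor
      · intro _; exact h0CC2
      · intro _; linarith
  · -- 1/2 < b - a : the big side is (connectedComponentIn Sᶜ x₁)
    have hS2CC1 : S' ⊆ (connectedComponentIn Sᶜ x₁) := by
      obtain ⟨p, hp⟩ := extRay_nonempty hφ (a + 1/2)
      have hpCC1 : p ∈ (connectedComponentIn Sᶜ x₁) := hrayCC1 (a + 1/2) (by linarith) (by linarith) hp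
      have hsub : S' ⊆ connectedComponentIn Sᶜ p :=
        hS'conn.isPreconnected.subset_connectedComponentIn (Or.inl (Or.inl hp)) hS'Sc
      rwa [← connectedComponentIn_eq hpCC1] at hsub
    have h0CC1 : (0:ℂ) ∈ (connectedComponentIn Sᶜ x₁) := by
      rcases htwo 0 h0Sc with h | h
      · rw [← h]; exact mem_connectedComponentIn h0Sc
      · exfalso
        have h0CC2 : (0:ℂ) ∈ (connectedComponentIn Sᶜ x₂) := by rw [← h]; exact mem_connectedComponentIn h0Sc
        exact hDarg (connectedComponentIn Sᶜ x₂) (connectedComponentIn Sᶜ x₁) ⟨x₂, hx₂Sc, rfl⟩ ⟨x₁, hx₁Sc, rfl⟩ (fun y h1 h2 => hdisj y h2 h1) hS2CC1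
          ⟨(a+b+1)/2, hcross₂, by rw [hcross₂']; exact hcross₁⟩ h0CC2
    have h0nCC2 : (0:ℂ) ∉ (connectedComponentIn Sᶜ x₂) := fun h => hdisj 0 h0CC1 h
    rcases hWcomp with hWe | hWe <;> rw [hWe]
    · rw [hwaCC1]
      exact ⟨hd_ne, ⟨fun _ => h0CC1, fun _ => hdgt⟩⟩
    · rw [hwaCC2]
      refine ⟨by intro h; apply hd_ne; linarith, ?_⟩
      constructor
      · intro h; linarith
      · intro h; exact absurd h h0nCC2

end WakeProof

/-- Let `W` be the wake of a ray pair landing at a biaccessible point `z ≠ α` of the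
Julia set of `f(z) = z² + c`, with `z` not the critical point `0`. Then the angle
`a(W)` satisfies `a(W) ≠ 1/2`, and `a(W) > 1/2` if and only if `W` contains the
critical point `0`. -/
theorem wake_angle_half_iff_critical
    (c α : ℂ) (hα : fc c α = α)
    (φ : ℂ → ℂ) (hφ : IsBottcher c φ)
    (z : ℂ) (hz : z ∈ julia c) (hzα : z ≠ α) (hz0 : z ≠ 0)
    (t t' : ℝ) (hdist : extRay c φ t ≠ extRay c φ t')
    (ht : landsAt c φ t z) (ht' : landsAt c φ t' z)
    (W : Set ℂ) (hW : IsWake c φ t t' z W) (hWα : α ∉ W) :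
    wakeAngle c φ W ≠ 1 / 2 ∧ (1 / 2 < wakeAngle c φ W ↔ (0 : ℂ) ∈ W) := by

  have hzK : z ∈ filledJulia c := WakeProof.julia_subset_filledJulia c hz
  have hray_t : extRay c φ t = extRay c φ (Int.fract t) := by
    apply WakeProof.extRay_congr
    apply WakeProof.e_eq_of_int_diff ⌊t⌋
    rw [Int.fract]
    ring
  have hray_t' : extRay c φ t' = extRay c φ (Int.fract t') := by
    apply WakeProof.extRay_congr
    apply WakeProof.e_eq_of_int_diff ⌊t'⌋
    rw [Int.fract]
    ring
  have hland_t : landsAt c φ (Int.fract t) z := by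
    unfold landsAt at ht ⊢
    rw [← hray_t]
    exact ht
  have hland_t' : landsAt c φ (Int.fract t') z := by
    unfold landsAt at ht' ⊢
    rw [← hray_t']
    exact ht'
  have hne : Int.fract t ≠ Int.fract t' := by
    intro h
    apply hdist
    rw [hray_t, hray_t', h]
  rcases hne.lt_or_gt with hlt | hlt
  · refine WakeProof.master hφ hα hzK hzα hz0 (Int.fract_nonneg t) hlt
      (Int.fract_lt_one t') hland_t hland_t' ?_ hWα
    obtain ⟨w, hw, hWeq⟩ := hW
    have hset : extRay c φ (Int.fract t) ∪ extRay c φ (Int.fract t') ∪ {z}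
        = extRay c φ t ∪ extRay c φ t' ∪ {z} := by rw [hray_t, hray_t']
    exact ⟨w, by rw [hset]; exact hw, by rw [hset]; exact hWeq⟩
  · refine WakeProof.master hφ hα hzK hzα hz0 (Int.fract_nonneg t') hlt
      (Int.fract_lt_one t) hland_t' hland_t ?_ hWα
    obtain ⟨w, hw, hWeq⟩ := hW
    have hset : extRay c φ (Int.fract t') ∪ extRay c φ (Int.fract t) ∪ {z}
        = extRay c φ t ∪ extRay c φ t' ∪ {z} := by
      rw [hray_t, hray_t', Set.union_comm (extRay c φ (Int.fract t')) (extRay c φ (Int.fract t))]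
    exact ⟨w, by rw [hset]; exact hw, by rw [hset]; exact hWeq⟩
end

section
/- Let f be a Siegel quadratic polynomial, and suppose every biaccessible point of J(f) has forward orbit eventually hitting the critical point 0. Then no point of J(f) is the landing point of more than two external rays; in particular at most one ray pair lands at 0. -/
open Complex

-- basic lemmas
lemma fc_continuous (c : ℂ) : Continuous (fc c) := by
  unfold fc; continuity

lemma escape_step (c : ℂ) {w : ℂ} (h : ‖c‖ + 2 < ‖w‖) :
    ∀ k : ℕ, ‖w‖ + k ≤ ‖(fc c)^[k] w‖ := by
  intro k
  induction k with
  | zero => simp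
  | succ k ih =>
    rw [Function.iterate_succ_apply']
    set v := (fc c)^[k] w with hv
    have h1 : ‖v ^ 2‖ - ‖c‖ ≤ ‖v ^ 2 + c‖ := by
      have h := norm_add_le (v^2 + c) (-c)
      simp only [add_neg_cancel_right, norm_neg] at h
      linarith
    have h2 : ‖v ^ 2‖ = (‖v‖) ^ 2 := by
      simp [norm_pow]
    have hc : (0:ℝ) ≤ ‖c‖ := norm_nonneg c
    have hk : (0:ℝ) ≤ (k:ℝ) := Nat.cast_nonneg k
    have hw : (0:ℝ) ≤ ‖w‖ := norm_nonneg w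
    have : ‖w‖ + (k+1:ℕ) ≤ (‖v‖)^2 - ‖c‖ := by
      push_cast
      nlinarith [ih, h]
    calc ‖w‖ + ((k+1 : ℕ):ℝ) ≤ (‖v‖)^2 - ‖c‖ := this
      _ ≤ ‖v^2 + c‖ := by rw [← h2]; exact h1
      _ = ‖fc c v‖ := rfl

lemma filledJulia_eq (c : ℂ) :
    (filledJulia c)ᶜ = ⋃ n : ℕ, {z : ℂ | ‖c‖ + 2 < ‖(fc c)^[n] z‖} := by
  ext z
  simp only [Set.mem_compl_iff, filledJulia, Set.mem_setOf_eq, Set.mem_iUnion]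
  constructor
  · intro h
    by_contra hc
    push_neg at hc
    exact h ⟨‖c‖ + 2, hc⟩
  · rintro ⟨n, hn⟩ ⟨M, hM⟩
    obtain ⟨k, hk⟩ := exists_nat_gt (M - ‖(fc c)^[n] z‖)
    have h1 := escape_step c hn k
    rw [← Function.iterate_add_apply] at h1
    have h2 := hM (k + n)
    linarith

lemma filledJulia_closed (c : ℂ) : IsClosed (filledJulia c) := by
  rw [← isOpen_compl_iff, filledJulia_eq]
  exact isOpen_iUnion fun n => isOpen_lt continuous_const
    (continuous_norm.comp ((fc_continuous c).iterate n))

lemma fc_mem_filledJulia {c : ℂ} {z : ℂ} (h : z ∈ filledJulia c) : fc c z ∈ filledJulia c := by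
  obtain ⟨M, hM⟩ := h
  exact ⟨M, fun n => by rw [← Function.iterate_succ_apply]; exact hM (n+1)⟩

lemma fc_not_mem_filledJulia {c : ℂ} {z : ℂ} (h : z ∉ filledJulia c) :
    fc c z ∉ filledJulia c := by
  intro hf
  apply h
  obtain ⟨M, hM⟩ := hf
  refine ⟨max M (‖z‖), fun n => ?_⟩
  cases n with
  | zero => simp
  | succ n =>
    rw [Function.iterate_succ_apply]
    exact le_max_of_le_left (hM n)

lemma neg_mem_filledJulia {c : ℂ} {z : ℂ} (h : -z ∈ filledJulia c) : z ∈ filledJulia c := by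
  obtain ⟨M, hM⟩ := h
  refine ⟨M, fun n => ?_⟩
  cases n with
  | zero => simpa using hM 0
  | succ n =>
    rw [Function.iterate_succ_apply]
    have : fc c z = fc c (-z) := by unfold fc; ring_nf
    rw [this, ← Function.iterate_succ_apply]
    exact hM (n+1)

lemma fc_mem_julia {c : ℂ} {z : ℂ} (h : z ∈ julia c) : fc c z ∈ julia c := by
  rw [julia, frontier_eq_closure_inter_closure] at h ⊢
  obtain ⟨h1, h2⟩ := h
  constructor
  · exact map_mem_closure (fc_continuous c) h1 (fun a ha => fc_mem_filledJulia ha)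
  · exact map_mem_closure (fc_continuous c) h2 (fun a ha => fc_not_mem_filledJulia ha)

lemma julia_subset {c : ℂ} : julia c ⊆ filledJulia c := by
  rw [julia]
  intro z hz
  have := frontier_subset_closure (s := filledJulia c) hz
  rwa [(filledJulia_closed c).closure_eq] at this
-- exp facts
lemma abs_exp_ray (t : ℝ) : ‖Complex.exp (2 * Real.pi * Complex.I * (t : ℂ))‖ = 1 := by
  rw [Complex.norm_exp]
  have : (2 * (Real.pi:ℂ) * Complex.I * (t : ℂ)).re = 0 := by
    simp [Complex.mul_re, Complex.mul_im]
  rw [this, Real.exp_zero]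

lemma exp_ray_congr {t t' : ℝ} (k : ℤ) (h : t' = t + k) :
    Complex.exp (2 * Real.pi * Complex.I * (t' : ℂ)) =
    Complex.exp (2 * Real.pi * Complex.I * (t : ℂ)) := by
  subst h
  push_cast
  rw [mul_add, Complex.exp_add]
  have : (2 * (Real.pi:ℂ) * Complex.I * (k:ℂ)) = (k:ℤ) * (2 * Real.pi * Complex.I) := by
    push_cast; ring
  rw [this, Complex.exp_int_mul_two_pi_mul_I, mul_one]

lemma extRay_congr {c : ℂ} {φ : ℂ → ℂ} {t t' : ℝ} (k : ℤ) (h : t' = t + k) :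
    extRay c φ t' = extRay c φ t := by
  unfold extRay
  rw [exp_ray_congr k h]

lemma angle_eq_of_ray_eq {c : ℂ} {φ : ℂ → ℂ} {t t' : ℝ}
    (hne : (extRay c φ t).Nonempty) (h : extRay c φ t = extRay c φ t') :
    ∃ k : ℤ, t' = t + k := by
  obtain ⟨w, hw⟩ := hne
  have hw' : w ∈ extRay c φ t' := h ▸ hw
  obtain ⟨-, r, hr, he⟩ := hw
  obtain ⟨-, r', hr', he'⟩ := hw'
  have habs : r = r' := by
    have h1 : ‖φ w‖ = r := by
      rw [he, norm_mul, abs_exp_ray, mul_one, Complex.norm_real, Real.norm_eq_abs, abs_of_pos (by linarith)]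
    have h2 : ‖φ w‖ = r' := by
      rw [he', norm_mul, abs_exp_ray, mul_one, Complex.norm_real, Real.norm_eq_abs, abs_of_pos (by linarith)]
    linarith [h1.symm.trans h2]
  subst habs
  have hr0 : (r : ℂ) ≠ 0 := by
    simp only [ne_eq, Complex.ofReal_eq_zero]; linarith
  have hee : Complex.exp (2 * Real.pi * Complex.I * (t : ℂ)) =
      Complex.exp (2 * Real.pi * Complex.I * (t' : ℂ)) :=
    mul_left_cancel₀ hr0 (he.symm.trans he')
  rw [Complex.exp_eq_exp_iff_exists_int] at hee
  obtain ⟨n, hn⟩ := hee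
  refine ⟨-n, ?_⟩
  have h2 : (2 * (Real.pi:ℂ) * Complex.I) * ((t:ℂ) - (t':ℂ) - n) = 0 := by
    linear_combination hn
  have hne2 : (2 * (Real.pi:ℂ) * Complex.I) ≠ 0 := by
    simp [Real.pi_ne_zero, Complex.I_ne_zero, Complex.ofReal_ne_zero]
  have h3 : (t:ℂ) - (t':ℂ) - n = 0 := by
    rcases mul_eq_zero.mp h2 with h | h
    · exact absurd h hne2
    · exact h
  have h4 : (t':ℂ) = (t:ℂ) + (-n : ℤ) := by push_cast; linear_combination -h3
  exact_mod_cast h4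

lemma ray_nonempty_of_lands {c : ℂ} {φ : ℂ → ℂ} {t : ℝ} {z : ℂ}
    (h : landsAt c φ t z) : (extRay c φ t).Nonempty := by
  by_contra he
  rw [Set.not_nonempty_iff_eq_empty] at he
  unfold landsAt at h
  rw [he] at h
  simp only [closure_empty, Set.empty_union] at h
  exact Set.singleton_ne_empty z h.symm
lemma bottcher_odd {c : ℂ} {φ : ℂ → ℂ} (hφ : IsBottcher c φ)
    (h0 : (0:ℂ) ∈ filledJulia c) {z : ℂ} (hz : z ∉ filledJulia c) :
    φ (-z) = -φ z := by
  have hnz : -z ∉ filledJulia c := fun h => hz (neg_mem_filledJulia h)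
  have h1 : φ (fc c (-z)) = φ (-z) ^ 2 := hφ.conj _ hnz
  have h2 : φ (fc c z) = φ z ^ 2 := hφ.conj _ hz
  have heq : fc c (-z) = fc c z := by unfold fc; ring_nf
  rw [heq, h2] at h1
  have h3 : (φ (-z) - φ z) * (φ (-z) + φ z) = 0 := by linear_combination -h1
  rcases mul_eq_zero.mp h3 with h | h
  · exfalso
    have : φ (-z) = φ z := by linear_combination h
    have hzz : -z = z := hφ.bijOn.injOn hnz hz this
    have hz0 : z = 0 := by
      have h2z : (2:ℂ) * z = 0 := by linear_combination -hzz
      simpa using (mul_eq_zero.mp h2z).resolve_left (by norm_num)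
    exact hz (hz0 ▸ h0)
  · linear_combination h

lemma exp_ray_half (t : ℝ) :
    Complex.exp (2 * Real.pi * Complex.I * ((t + 1/2 : ℝ) : ℂ)) =
    -Complex.exp (2 * Real.pi * Complex.I * (t : ℂ)) := by
  push_cast
  rw [mul_add, Complex.exp_add]
  have : 2 * (Real.pi:ℂ) * Complex.I * (1/2) = (Real.pi:ℂ) * Complex.I := by ring
  rw [this, Complex.exp_pi_mul_I]
  ring

lemma extRay_half {c : ℂ} {φ : ℂ → ℂ} (hφ : IsBottcher c φ)
    (h0 : (0:ℂ) ∈ filledJulia c) (t : ℝ) :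
    extRay c φ (t + 1/2) = -(extRay c φ t) := by
  ext w
  rw [Set.mem_neg]
  constructor
  · rintro ⟨hw, r, hr, he⟩
    have hnw : -w ∉ filledJulia c := fun h => hw (neg_mem_filledJulia h)
    refine ⟨hnw, r, hr, ?_⟩
    rw [bottcher_odd hφ h0 hw, he, exp_ray_half]
    ring
  · rintro ⟨hw, r, hr, he⟩
    have hnw : w ∉ filledJulia c := fun h => hw (neg_mem_filledJulia (by rwa [neg_neg]))
    refine ⟨hnw, r, hr, ?_⟩
    have ho := bottcher_odd hφ h0 hnw
    have hphiw : φ w = -φ (-w) := by linear_combination ho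
    rw [hphiw, he, exp_ray_half]
    ring
lemma exp_ray_double (t : ℝ) :
    Complex.exp (2 * Real.pi * Complex.I * (t : ℂ)) ^ 2 =
    Complex.exp (2 * Real.pi * Complex.I * ((2 * t : ℝ) : ℂ)) := by
  rw [sq, ← Complex.exp_add]
  congr 1
  push_cast
  ring

lemma fc_image_ray {c : ℂ} {φ : ℂ → ℂ} (hφ : IsBottcher c φ) (t : ℝ) :
    fc c '' extRay c φ t = extRay c φ (2 * t) := by
  ext w
  constructor
  · rintro ⟨z, ⟨hz, r, hr, he⟩, rfl⟩
    refine ⟨fc_not_mem_filledJulia hz, r ^ 2, by nlinarith, ?_⟩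
    rw [hφ.conj z hz, he]
    rw [mul_pow, exp_ray_double]
    push_cast
    ring
  · rintro ⟨hw, s, hs, he⟩
    have hs0 : (0:ℝ) ≤ s := by linarith
    set v := Real.sqrt s with hv
    have hv1 : 1 < v := by
      rw [hv, show (1:ℝ) = Real.sqrt 1 by simp]
      exact Real.sqrt_lt_sqrt (by norm_num) hs
    have hv2 : v ^ 2 = s := Real.sq_sqrt hs0
    have hp : (v : ℂ) * Complex.exp (2 * Real.pi * Complex.I * (t : ℂ)) ∈
        {w : ℂ | 1 < ‖w‖} := by
      simp only [Set.mem_setOf_eq, norm_mul, abs_exp_ray, mul_one, Complex.norm_real, Real.norm_eq_abs]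
      rwa [abs_of_pos (by linarith)]
    obtain ⟨u, hu, hup⟩ := hφ.bijOn.surjOn hp
    have huR : u ∈ extRay c φ t := ⟨hu, v, hv1, hup⟩
    have hfu : fc c u ∉ filledJulia c := fc_not_mem_filledJulia hu
    have heq : φ (fc c u) = φ w := by
      rw [hφ.conj u hu, hup, he, mul_pow, exp_ray_double, ← hv2]
      push_cast
      ring
    have : fc c u = w := hφ.bijOn.injOn hfu hw heq
    exact ⟨u, huR, this⟩
lemma lands_pushforward {c : ℂ} {φ : ℂ → ℂ} (hφ : IsBottcher c φ) {t : ℝ} {y : ℂ}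
    (h : landsAt c φ t y) : landsAt c φ (2 * t) (fc c y) := by
  unfold landsAt at h ⊢
  apply Set.Subset.antisymm
  · -- closure ⊆ ray ∪ {fc c y}
    intro w hw
    rw [mem_closure_iff_seq_limit] at hw
    obtain ⟨x, hx, hlim⟩ := hw
    have hx' : ∀ n, x n ∈ fc c '' extRay c φ t := by
      intro n
      rw [fc_image_ray hφ t]
      exact hx n
    choose u hu hfu using hx'
    -- bound on |x n|
    have habs : Filter.Tendsto (fun n => ‖x n‖) Filter.atTop
        (nhds (‖w‖)) := (continuous_norm.tendsto w).comp hlim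
    obtain ⟨C, hC⟩ := habs.bddAbove_range
    have hCb : ∀ n, ‖x n‖ ≤ C := fun n => hC ⟨n, rfl⟩
    have hC0 : (0:ℝ) ≤ C := le_trans (norm_nonneg _) (hCb 0)
    set B := Real.sqrt (C + ‖c‖) with hB
    have hub : ∀ n, u n ∈ Metric.closedBall (0:ℂ) B := by
      intro n
      have h1 : (u n) ^ 2 = x n - c := by
        have := hfu n
        unfold fc at this
        linear_combination this
      have h2 : ‖u n‖ ^ 2 ≤ C + ‖c‖ := by
        rw [← norm_pow, h1]
        calc ‖x n - c‖ ≤ ‖x n‖ + ‖c‖ := by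
              simpa [sub_eq_add_neg] using norm_add_le (x n) (-c)
          _ ≤ C + ‖c‖ := by linarith [hCb n]
      have h3 : ‖u n‖ ≤ B := by
        rw [hB, show ‖u n‖ = Real.sqrt (‖u n‖ ^ 2) by
          rw [Real.sqrt_sq (norm_nonneg _)]]
        exact Real.sqrt_le_sqrt h2
      simpa [Complex.dist_eq] using h3
    obtain ⟨b, -, ψ, hψ, hψlim⟩ :=
      tendsto_subseq_of_bounded Metric.isBounded_closedBall hub
    have hbc : b ∈ closure (extRay c φ t) :=
      mem_closure_of_tendsto hψlim (Filter.Eventually.of_forall fun k => hu (ψ k))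
    rw [h] at hbc
    have hwb : w = fc c b := by
      have l1 : Filter.Tendsto (x ∘ ψ) Filter.atTop (nhds w) :=
        hlim.comp hψ.tendsto_atTop
      have l2 : Filter.Tendsto (x ∘ ψ) Filter.atTop (nhds (fc c b)) := by
        have : x ∘ ψ = fc c ∘ (u ∘ ψ) := by
          funext k
          simp [Function.comp, hfu (ψ k)]
        rw [this]
        exact (((fc_continuous c).tendsto b).comp hψlim)
      exact tendsto_nhds_unique l1 l2
    rcases hbc with hb | hb
    · left
      rw [← fc_image_ray hφ t, hwb]
      exact ⟨b, hb, rfl⟩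
    · right
      rw [Set.mem_singleton_iff] at hb ⊢
      rw [hwb, hb]
  · apply Set.union_subset subset_closure
    rw [Set.singleton_subset_iff]
    have hy : y ∈ closure (extRay c φ t) := by
      rw [h]; exact Set.mem_union_right _ rfl
    have hmt : Set.MapsTo (fc c) (extRay c φ t) (extRay c φ (2*t)) := fun a ha =>
      (fc_image_ray hφ t) ▸ Set.mem_image_of_mem _ ha
    exact map_mem_closure (fc_continuous c) hy hmt
lemma antipodal {c : ℂ} {φ : ℂ → ℂ} (hφ : IsBottcher c φ)
    (h0 : (0:ℂ) ∈ filledJulia c) {s s' : ℝ} {y : ℂ}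
    (hyK : y ∈ filledJulia c) (hy0 : y ≠ 0)
    (hE : ¬ ∃ k : ℤ, s' = s + k) (hE2 : ∃ k : ℤ, 2 * s' = 2 * s + k)
    (h1 : landsAt c φ s y) (h2 : landsAt c φ s' y) : False := by
  obtain ⟨k, hk⟩ := hE2
  rcases Int.even_or_odd k with ⟨j, hj⟩ | ⟨j, hj⟩
  · apply hE
    refine ⟨j, ?_⟩
    have : (k:ℝ) = 2 * j := by exact_mod_cast (by rw [hj]; ring : k = 2 * j)
    rw [this] at hk
    linarith
  · -- k = 2j+1, so s' ≡ s + 1/2 + j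
    have hs' : s' = (s + 1/2) + (j : ℝ) := by
      have : (k:ℝ) = 2 * j + 1 := by exact_mod_cast hj
      rw [this] at hk
      linarith
    have hray : extRay c φ s' = -(extRay c φ s) := by
      rw [extRay_congr j hs', extRay_half hφ h0]
    have hc2 : closure (extRay c φ s') = extRay c φ s' ∪ {-y} := by
      rw [hray, ← neg_closure, h1, Set.union_neg, Set.neg_singleton]
    unfold landsAt at h2
    rw [hc2] at h2
    have hy : y ∈ extRay c φ s' ∪ {-y} := by
      rw [h2]
      exact Set.mem_union_right _ rfl
    rcases hy with hy | hy
    · exact hy.1 hyK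
    · rw [Set.mem_singleton_iff] at hy
      apply hy0
      have : (2:ℂ) * y = 0 := by linear_combination hy
      simpa using (mul_eq_zero.mp this).resolve_left (by norm_num)

lemma pigeonhole {t₁ t₂ t₃ : ℝ}
    (h12 : ¬ ∃ k : ℤ, t₂ = t₁ + k) (h13 : ¬ ∃ k : ℤ, t₃ = t₁ + k)
    (h23 : ¬ ∃ k : ℤ, t₃ = t₂ + k) :
    (¬ ∃ k : ℤ, 2*t₂ = 2*t₁ + k) ∨ (¬ ∃ k : ℤ, 2*t₃ = 2*t₁ + k) ∨
    (¬ ∃ k : ℤ, 2*t₃ = 2*t₂ + k) := by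
  by_contra hcon
  push_neg at hcon
  obtain ⟨⟨k, hk⟩, ⟨m, hm⟩, -⟩ := hcon
  rcases Int.even_or_odd k with ⟨j, hj⟩ | ⟨j, hj⟩
  · apply h12
    refine ⟨j, ?_⟩
    have : (k:ℝ) = 2 * j := by exact_mod_cast (by rw [hj]; ring : k = 2 * j)
    rw [this] at hk
    linarith
  · rcases Int.even_or_odd m with ⟨i, hi⟩ | ⟨i, hi⟩
    · apply h13
      refine ⟨i, ?_⟩
      have : (m:ℝ) = 2 * i := by exact_mod_cast (by rw [hi]; ring : m = 2 * i)
      rw [this] at hm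
      linarith
    · apply h23
      refine ⟨i - j, ?_⟩
      have hkr : (k:ℝ) = 2 * j + 1 := by exact_mod_cast hj
      have hmr : (m:ℝ) = 2 * i + 1 := by exact_mod_cast hi
      push_cast
      rw [hkr] at hk
      rw [hmr] at hm
      linarith

/-- Let `f(z) = z² + c` be a Siegel quadratic polynomial (the fixed point `α` is
indifferent and linearizable, so `0 ∈ J(f)` is not periodic). If every biaccessible
point of `J(f)` has forward orbit eventually hitting the critical point `0`, then no
point of `J(f)` is the landing point of more than two external rays; in particular at
most one ray pair lands at `0`. -/
theorem at_most_two_rays_land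
    (c α : ℂ) (hα : fc c α = α) (hind : ‖2 * α‖ = 1)
    (hJ : (0 : ℂ) ∈ julia c) (hper : ∀ n : ℕ, 0 < n → (fc c)^[n] 0 ≠ 0)
    (φ : ℂ → ℂ) (hφ : IsBottcher c φ)
    (hbi : ∀ z ∈ julia c,
      (∃ t t' : ℝ, extRay c φ t ≠ extRay c φ t' ∧
        landsAt c φ t z ∧ landsAt c φ t' z) →
      ∃ n : ℕ, (fc c)^[n] z = 0) :
    ∀ z ∈ julia c, ¬ ∃ t₁ t₂ t₃ : ℝ,
      extRay c φ t₁ ≠ extRay c φ t₂ ∧ extRay c φ t₁ ≠ extRay c φ t₃ ∧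
      extRay c φ t₂ ≠ extRay c φ t₃ ∧
      landsAt c φ t₁ z ∧ landsAt c φ t₂ z ∧ landsAt c φ t₃ z := by
  classical
  intro z hz h3
  obtain ⟨t₁, t₂, t₃, h12, h13, h23, l1, l2, l3⟩ := h3
  have hKc := filledJulia_closed c
  have h0K : (0:ℂ) ∈ filledJulia c := by
    have := frontier_subset_closure (s := filledJulia c) hJ
    rwa [hKc.closure_eq] at this
  have e12 : ¬ ∃ k : ℤ, t₂ = t₁ + k := fun ⟨k, hk⟩ => h12 (extRay_congr k hk).symm
  have e13 : ¬ ∃ k : ℤ, t₃ = t₁ + k := fun ⟨k, hk⟩ => h13 (extRay_congr k hk).symm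
  have e23 : ¬ ∃ k : ℤ, t₃ = t₂ + k := fun ⟨k, hk⟩ => h23 (extRay_congr k hk).symm
  obtain ⟨N, hN⟩ := hbi z hz ⟨t₁, t₂, h12, l1, l2⟩
  have hP : ∃ n, (fc c)^[n] z = 0 := ⟨N, hN⟩
  have main : ∀ k, k ≤ Nat.find hP → ((fc c)^[k] z ∈ julia c ∧ ∃ s₁ s₂ s₃ : ℝ,
      (¬∃ j:ℤ, s₂ = s₁ + j) ∧ (¬∃ j:ℤ, s₃ = s₁ + j) ∧ (¬∃ j:ℤ, s₃ = s₂ + j) ∧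
      landsAt c φ s₁ ((fc c)^[k] z) ∧ landsAt c φ s₂ ((fc c)^[k] z) ∧
      landsAt c φ s₃ ((fc c)^[k] z)) := by
    intro k
    induction k with
    | zero =>
      intro _
      exact ⟨by simpa using hz, t₁, t₂, t₃, e12, e13, e23,
        by simpa using l1, by simpa using l2, by simpa using l3⟩
    | succ k ih =>
      intro hk
      obtain ⟨hjul, s₁, s₂, s₃, f12, f13, f23, m1, m2, m3⟩ := ih (Nat.le_of_succ_le hk)
      have hne0 : (fc c)^[k] z ≠ 0 := Nat.find_min hP (Nat.lt_of_succ_le hk)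
      have hyK : (fc c)^[k] z ∈ filledJulia c := julia_subset hjul
      refine ⟨?_, 2*s₁, 2*s₂, 2*s₃, ?_, ?_, ?_, ?_, ?_, ?_⟩
      · rw [Function.iterate_succ_apply']; exact fc_mem_julia hjul
      · exact fun hE2 => antipodal hφ h0K hyK hne0 f12 hE2 m1 m2
      · exact fun hE2 => antipodal hφ h0K hyK hne0 f13 hE2 m1 m3
      · exact fun hE2 => antipodal hφ h0K hyK hne0 f23 hE2 m2 m3
      · rw [Function.iterate_succ_apply']; exact lands_pushforward hφ m1
      · rw [Function.iterate_succ_apply']; exact lands_pushforward hφ m2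
      · rw [Function.iterate_succ_apply']; exact lands_pushforward hφ m3
  obtain ⟨-, s₁, s₂, s₃, f12, f13, f23, m1, m2, m3⟩ := main (Nat.find hP) le_rfl
  have hzero : (fc c)^[Nat.find hP] z = 0 := Nat.find_spec hP
  rw [hzero] at m1 m2 m3
  have final : ∀ a b : ℝ, (¬∃ k:ℤ, 2*b = 2*a+k) → landsAt c φ a 0 → landsAt c φ b 0 →
      False := by
    intro a b hEab la lb
    have la' := lands_pushforward hφ la
    have lb' := lands_pushforward hφ lb
    have hne : extRay c φ (2*a) ≠ extRay c φ (2*b) := fun heq =>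
      hEab (angle_eq_of_ray_eq (ray_nonempty_of_lands la') heq)
    have hcj : fc c 0 ∈ julia c := fc_mem_julia hJ
    obtain ⟨m, hm⟩ := hbi (fc c 0) hcj ⟨2*a, 2*b, hne, la', lb'⟩
    apply hper (m+1) (Nat.succ_pos m)
    rw [Function.iterate_succ_apply]
    exact hm
  rcases pigeonhole f12 f13 f23 with h | h | h
  · exact final s₁ s₂ h m1 m2
  · exact final s₁ s₃ h m1 m3
  · exact final s₂ s₃ h m2 m3
end
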